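/- arXiv:1601.07293 — 4 statements merged into one kernel-verified Lean document; each statement's English description precedes it below -/
import Mathlib

section
/- Let v be a discrete valuation on a field K and let δ_v be the v-adic logarithmic distance on ℙ¹(K). Then for all points P₁, P₂, P₃ in ℙ¹(K), δ_v(P₁,P₃) ≥ min{δ_v(P₁,P₂), δ_v(P₂,P₃)}. -/
/-! Write `D(P, Q) = x_P y_Q − x_Q y_P`. Three vectors of `K²` satisfy the linear relation
`D(P₁,P₃) P₂ = D(P₂,P₃) P₁ + D(P₁,P₂) P₃`. Applying the ultrametric inequality to each
coordinate of it and taking the better coordinate of `P₂` gives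
`min{m₁ + v D(P₂,P₃), m₃ + v D(P₁,P₂)} ≤ m₂ + v D(P₁,P₃)` with `mᵢ = min{v(xᵢ), v(yᵢ)}`;
subtracting `m₁ + m₂ + m₃` (possible because `m₂` is finite) is the claim. -/

noncomputable section

/-- The `v`-adic logarithmic distance between coordinate representatives of points of
`ℙ¹(K)`:  `δ_v(P₁,P₂) = v(x₁y₂ − x₂y₁) − min{v(x₁),v(y₁)} − min{v(x₂),v(y₂)}`. -/
def logDist {K : Type} [Field K] (v : K → WithTop ℤ) (P Q : K × K) : WithTop ℤ :=
  v (P.1 * Q.2 - Q.1 * P.2) - min (v P.1) (v P.2) - min (v Q.1) (v Q.2)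

section Arithmetic

variable {α : Type*} [LinearOrderedAddCommGroupWithTop α]

open LinearOrderedAddCommGroupWithTop

lemma sub_le_sub_of_add_le_add {a b c d : α} (hb : b ≠ ⊤) (hd : d ≠ ⊤) (h : a + d ≤ c + b) :
    a - b ≤ c - d :=
  calc a - b = a + d + -b + -d := by
        rw [add_right_comm, add_neg_cancel_right_of_ne_top hd, sub_eq_add_neg]
    _ ≤ c + b + -b + -d := by gcongr
    _ = c - d := by rw [add_neg_cancel_right_of_ne_top hb, sub_eq_add_neg]

lemma min_sub_sub_le_sub_sub {a b c m₁ m₂ m₃ : α} (hm₂ : m₂ ≠ ⊤)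
    (h : min (c + m₁) (b + m₃) ≤ a + m₂) :
    min (b - m₁ - m₂) (c - m₂ - m₃) ≤ a - m₁ - m₃ := by
  -- `x - ⊤ = ⊤`, so the right-hand side is `⊤` as soon as `m₁` or `m₃` is.
  rcases eq_or_ne m₁ ⊤ with rfl | hm₁
  · simp [sub_eq_add_neg]
  rcases eq_or_ne m₃ ⊤ with rfl | hm₃
  · simp
  rcases min_le_iff.mp h with h | h
  · refine min_le_of_right_le ?_
    rw [sub_eq_add_neg _ m₃, sub_eq_add_neg _ m₃]
    gcongr
    exact sub_le_sub_of_add_le_add hm₂ hm₁ h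
  · refine min_le_of_left_le (sub_le_sub_of_add_le_add hm₂ hm₃ ?_)
    simp only [sub_eq_add_neg, add_right_comm _ (-m₁)]
    gcongr

end Arithmetic

section Valuation

variable {R Γ : Type*} [LinearOrder Γ]

lemma min_fst_snd_ne_top [Zero R] [OrderTop Γ] {v : R → Γ}
    (hv : ∀ x, x ≠ 0 → v x ≠ ⊤) {P : R × R} (hP : P ≠ 0) : min (v P.1) (v P.2) ≠ ⊤ := by
  rw [Ne, min_eq_top]
  rintro ⟨h₁, h₂⟩
  exact hP (Prod.ext (by_contra fun h => hv _ h h₁) (by_contra fun h => hv _ h h₂))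

lemma min_add_le_of_mul_eq_add [Add Γ] [Mul R] [Add R] (v : R → Γ)
    (hvmul : ∀ x y, v (x * y) = v x + v y) (hvadd : ∀ x y, min (v x) (v y) ≤ v (x + y))
    {a b c x y z : R} (h : c * z = a * x + b * y) : min (v a + v x) (v b + v y) ≤ v c + v z := by
  simpa only [← hvmul, h] using hvadd (a * x) (b * y)

variable [AddCommMonoid Γ] [IsOrderedAddMonoid Γ] [CommRing R]

def cross (P Q : R × R) : R := P.1 * Q.2 - Q.1 * P.2

lemma cross_smul_eq_add (P₁ P₂ P₃ : R × R) :
    cross P₁ P₃ • P₂ = cross P₂ P₃ • P₁ + cross P₁ P₂ • P₃ := by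
  ext <;> simp only [cross, Prod.smul_fst, Prod.smul_snd, Prod.fst_add, Prod.snd_add,
    smul_eq_mul] <;> ring

lemma min_add_cross_le (v : R → Γ)
    (hvmul : ∀ x y, v (x * y) = v x + v y) (hvadd : ∀ x y, min (v x) (v y) ≤ v (x + y))
    (P₁ P₂ P₃ : R × R) :
    min (v (cross P₂ P₃) + min (v P₁.1) (v P₁.2)) (v (cross P₁ P₂) + min (v P₃.1) (v P₃.2)) ≤
      v (cross P₁ P₃) + min (v P₂.1) (v P₂.2) := by
  have hfst := congrArg Prod.fst (cross_smul_eq_add P₁ P₂ P₃)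
  have hsnd := congrArg Prod.snd (cross_smul_eq_add P₁ P₂ P₃)
  simp only [Prod.smul_fst, Prod.smul_snd, Prod.fst_add, Prod.snd_add, smul_eq_mul] at hfst hsnd
  rw [← min_add_add_left (v (cross P₁ P₃))]
  refine le_min ?_ ?_
  · refine le_trans ?_ (min_add_le_of_mul_eq_add v hvmul hvadd hfst)
    gcongr <;> apply min_le_left
  · refine le_trans ?_ (min_add_le_of_mul_eq_add v hvmul hvadd hsnd)
    gcongr <;> apply min_le_right

end Valuation

theorem logDist_triangle_general {K : Type} [Field K] (v : K → WithTop ℤ)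
    (hvfin : ∀ x : K, x ≠ 0 → v x ≠ ⊤)
    (hvmul : ∀ x y : K, v (x * y) = v x + v y)
    (hvadd : ∀ x y : K, min (v x) (v y) ≤ v (x + y))
    (P₁ P₂ P₃ : K × K) (h₂ : P₂ ≠ (0, 0)) :
    min (logDist v P₁ P₂) (logDist v P₂ P₃) ≤ logDist v P₁ P₃ :=
  min_sub_sub_le_sub_sub (min_fst_snd_ne_top hvfin h₂) (min_add_cross_le v hvmul hvadd P₁ P₂ P₃)

/-- Ultrametric-type inequality for the `v`-adic logarithmic distance:
`δ_v(P₁,P₃) ≥ min{δ_v(P₁,P₂), δ_v(P₂,P₃)}` for all `P₁, P₂, P₃ ∈ ℙ¹(K)`. -/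
theorem logDist_triangle {K : Type} [Field K] (v : K → WithTop ℤ)
    (hv0 : v 0 = ⊤) (hvfin : ∀ x : K, x ≠ 0 → v x ≠ ⊤)
    (hvmul : ∀ x y : K, v (x * y) = v x + v y)
    (hvadd : ∀ x y : K, min (v x) (v y) ≤ v (x + y))
    (hvdisc : ∀ n : ℤ, ∃ x : K, v x = (n : WithTop ℤ))
    (P₁ P₂ P₃ : K × K) (h₁ : P₁ ≠ (0, 0)) (h₂ : P₂ ≠ (0, 0)) (h₃ : P₃ ≠ (0, 0)) :
    min (logDist v P₁ P₂) (logDist v P₂ P₃) ≤ logDist v P₁ P₃ :=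
  logDist_triangle_general v hvfin hvmul hvadd P₁ P₂ P₃ h₂
end
end

section
/- Let v be a discrete valuation on a field K with valuation ring R_v. Let φ([X:Y]) = [F(X,Y):G(X,Y)] be a morphism of ℙ¹ defined over K of degree d ≥ 1 written in v-reduced form (F, G coprime homogeneous of degree d with coefficients in R_v, at least one coefficient a unit) with good reduction at v (the resultant Res(F,G) is a v-unit). Then for all P, Q in ℙ¹(K), δ_v(φ(P), φ(Q)) ≥ δ_v(P, Q). -/
noncomputable section

/-- Evaluation at a point of the pair of binary forms
`F(X,Y) = ∑ aᵢ Xⁱ Y^(d−i)`, `G(X,Y) = ∑ bᵢ Xⁱ Y^(d−i)` of degree `d`,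
i.e. the map `φ([X:Y]) = [F(X,Y):G(X,Y)]` in homogeneous coordinates. -/
def evalPair {K : Type} [CommRing K] (d : ℕ) (a b : Fin (d+1) → K) (P : K × K) : K × K :=
  (∑ i : Fin (d+1), a i * P.1 ^ (i:ℕ) * P.2 ^ (d - (i:ℕ)),
   ∑ i : Fin (d+1), b i * P.1 ^ (i:ℕ) * P.2 ^ (d - (i:ℕ)))

/-- The Sylvester matrix of the two binary forms of degree `d` with coefficient
vectors `a`, `b`. -/
def sylvester {K : Type} [CommRing K] (d : ℕ) (a b : Fin (d+1) → K) :
    Matrix (Fin (d+d)) (Fin (d+d)) K :=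
  fun i j =>
    if _ : (i:ℕ) < d then
      if hj : (i:ℕ) ≤ (j:ℕ) ∧ (j:ℕ) ≤ (i:ℕ) + d then a ⟨(j:ℕ) - (i:ℕ), by omega⟩ else 0
    else
      if hj : (i:ℕ) - d ≤ (j:ℕ) ∧ (j:ℕ) ≤ (i:ℕ) then b ⟨(j:ℕ) - ((i:ℕ) - d), by omega⟩ else 0

/-- The (homogeneous) resultant `Res(F,G)` of the two binary forms of degree `d`,
as the determinant of their Sylvester matrix. -/
def resultant {K : Type} [CommRing K] (d : ℕ) (a b : Fin (d+1) → K) : K :=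
  (sylvester d a b).det



section Val
variable {K : Type} [Field K] (v : K → WithTop ℤ)
  (hv0 : v 0 = ⊤) (hvfin : ∀ x : K, x ≠ 0 → v x ≠ ⊤)
  (hvmul : ∀ x y : K, v (x * y) = v x + v y)
  (hvadd : ∀ x y : K, min (v x) (v y) ≤ v (x + y))

include hvfin hvmul in
theorem my_v1 : v 1 = 0 := by
  have h := hvmul 1 1
  rw [mul_one] at h
  lift v 1 to ℤ using hvfin 1 one_ne_zero with a ha
  rw [show ((a:WithTop ℤ) + a) = ((a + a : ℤ) : WithTop ℤ) from by push_cast; rfl,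
    WithTop.coe_eq_coe] at h
  have : a = 0 := by omega
  rw [this]; rfl

include hvfin hvmul in
theorem my_vneg (x : K) : v (-x) = v x := by
  have hm1 : v (-1 : K) = 0 := by
    have h := hvmul (-1) (-1)
    rw [neg_mul_neg, one_mul, my_v1 v hvfin hvmul] at h
    rcases eq_or_ne (v (-1:K)) ⊤ with h1 | h1
    · rw [h1] at h; simp at h
    · lift v (-1:K) to ℤ using h1 with a ha
      rw [show ((a:WithTop ℤ) + a) = ((a + a : ℤ) : WithTop ℤ) from by push_cast; rfl] at h
      have : (a + a : ℤ) = 0 := by exact_mod_cast h.symm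
      have : a = 0 := by omega
      rw [this]; rfl
  rw [show -x = -1 * x from by ring, hvmul, hm1, zero_add]

include hv0 hvadd in
theorem my_vsum {ι : Type*} (s : Finset ι) (f : ι → K) (c : WithTop ℤ)
    (h : ∀ i ∈ s, c ≤ v (f i)) : c ≤ v (∑ i ∈ s, f i) := by
  classical
  induction s using Finset.induction_on with
  | empty => simp [hv0]
  | @insert x₀ s₀ hx ih =>
    rw [Finset.sum_insert hx]
    refine le_trans ?_ (hvadd _ _)
    exact le_min (h x₀ (Finset.mem_insert_self _ _))
      (ih fun i hi => h i (Finset.mem_insert_of_mem hi))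

include hvfin hvmul in
theorem my_vprod {ι : Type*} (s : Finset ι) (f : ι → K)
    (h : ∀ i ∈ s, 0 ≤ v (f i)) : 0 ≤ v (∏ i ∈ s, f i) := by
  classical
  induction s using Finset.induction_on with
  | empty => simp [my_v1 v hvfin hvmul]
  | @insert x₀ s₀ hx ih =>
    rw [Finset.prod_insert hx, hvmul]
    exact add_nonneg (h x₀ (Finset.mem_insert_self _ _))
      (ih fun i hi => h i (Finset.mem_insert_of_mem hi))

include hvfin hvmul in
theorem my_vpow_exact (x : K) (c : ℤ) (hx : v x = (c : WithTop ℤ)) (n : ℕ) :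
    v (x ^ n) = ((n * c : ℤ) : WithTop ℤ) := by
  induction n with
  | zero =>
    simp only [pow_zero, Nat.cast_zero, zero_mul]
    exact my_v1 v hvfin hvmul
  | succ n ih =>
    rw [pow_succ, hvmul, ih, hx]
    rw [show ((n * c : ℤ) : WithTop ℤ) + (c : WithTop ℤ) = ((n*c + c : ℤ) : WithTop ℤ) from by push_cast; rfl]
    congr 1; push_cast; ring

include hvfin hvmul in
theorem my_vpow_le (x : K) (c : ℤ) (hx : (c : WithTop ℤ) ≤ v x) (n : ℕ) :
    ((n * c : ℤ) : WithTop ℤ) ≤ v (x ^ n) := by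
  induction n with
  | zero => simp [my_v1 v hvfin hvmul]
  | succ n ih =>
    rw [pow_succ, hvmul, show (((n+1 : ℕ) * c : ℤ) : WithTop ℤ)
        = ((n * c : ℤ) : WithTop ℤ) + (c : WithTop ℤ) from by
      rw [← WithTop.coe_add]; congr 1; push_cast; ring]
    exact add_le_add ih hx

include hvfin hvmul in
theorem my_vmono (x y : K) (m₀ : ℤ) (hx : (m₀ : WithTop ℤ) ≤ v x)
    (hy : (m₀ : WithTop ℤ) ≤ v y) (c e : ℕ) :
    (((c + e : ℕ) * m₀ : ℤ) : WithTop ℤ) ≤ v (x ^ c * y ^ e) := by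
  rw [hvmul, show (((c + e : ℕ) * m₀ : ℤ) : WithTop ℤ)
      = ((c * m₀ : ℤ) : WithTop ℤ) + ((e * m₀ : ℤ) : WithTop ℤ) from by
    rw [← WithTop.coe_add]; congr 1; push_cast; ring]
  exact add_le_add (my_vpow_le v hvfin hvmul x m₀ hx c) (my_vpow_le v hvfin hvmul y m₀ hy e)

include hv0 hvfin hvmul hvadd in
theorem my_vdet {n : ℕ} (M : Matrix (Fin n) (Fin n) K) (h : ∀ i j, 0 ≤ v (M i j)) :
    0 ≤ v M.det := by
  rw [Matrix.det_apply']
  refine my_vsum v hv0 hvadd _ _ _ fun σ _ => ?_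
  rw [hvmul]
  have h1 : 0 ≤ v ((Equiv.Perm.sign σ : ℤ) : K) := by
    rcases Int.units_eq_one_or (Equiv.Perm.sign σ) with h' | h' <;> rw [h']
    · simp [my_v1 v hvfin hvmul]
    · push_cast
      rw [my_vneg v hvfin hvmul, my_v1 v hvfin hvmul]
  exact add_nonneg h1 (my_vprod v hvfin hvmul _ _ fun i _ => h _ _)

include hv0 hvfin hvmul hvadd in
theorem my_vadjugate {n : ℕ} (M : Matrix (Fin n) (Fin n) K) (h : ∀ i j, 0 ≤ v (M i j))
    (i j : Fin n) : 0 ≤ v (M.adjugate i j) := by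
  rw [Matrix.adjugate_apply]
  refine my_vdet v hv0 hvfin hvmul hvadd _ fun i' j' => ?_
  rw [Matrix.updateRow_apply]
  split
  · rw [Pi.single_apply]
    split
    · simp [my_v1 v hvfin hvmul]
    · simp [hv0]
  · exact h _ _
end Val

theorem sylvester_entry_nonneg {K : Type} [Field K] (v : K → WithTop ℤ)
    (hv0 : v 0 = ⊤) (d : ℕ) (a b : Fin (d+1) → K)
    (hint : ∀ i, 0 ≤ v (a i) ∧ 0 ≤ v (b i)) (i j : Fin (d+d)) :
    0 ≤ v (sylvester d a b i j) := by
  unfold sylvester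
  split <;> split
  · exact (hint _).1
  · simp [hv0]
  · exact (hint _).2
  · simp [hv0]




def padCoef {K : Type} [Field K] (d : ℕ) (a : Fin (d+1) → K) : ℕ → K :=
  fun k => if h : k < d+1 then a ⟨k, h⟩ else 0

theorem rowsum {K : Type} [Field K] (x y : K) (d o : ℕ) (ho : o < d) (A : ℕ → K) :
    ∑ j ∈ Finset.range (d+d),
        (if o ≤ j ∧ j ≤ o + d then A (j-o) else 0) * (x^j * y^(d+d-1-j))
      = x^o * y^(d-1-o) * ∑ k ∈ Finset.range (d+1), A k * (x^k * y^(d-k)) := by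
  have hsub : Finset.Icc o (o+d) ⊆ Finset.range (d+d) := by
    intro j hj
    simp only [Finset.mem_Icc] at hj
    simp only [Finset.mem_range]
    omega
  have hvan : ∀ j ∈ Finset.range (d+d), j ∉ Finset.Icc o (o+d) →
      (if o ≤ j ∧ j ≤ o + d then A (j-o) else 0) * (x^j * y^(d+d-1-j)) = 0 := by
    intro j _ hj
    simp only [Finset.mem_Icc, not_and_or, not_le] at hj
    rw [if_neg (by omega), zero_mul]
  rw [← Finset.sum_subset hsub hvan, ← Finset.Ico_add_one_right_eq_Icc, Finset.sum_Ico_eq_sum_range]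
  simp only [show o + d + 1 - o = d + 1 from by omega]
  rw [Finset.mul_sum]
  refine Finset.sum_congr rfl fun k hk => ?_
  simp only [Finset.mem_range] at hk
  rw [if_pos (by omega : o ≤ o + k ∧ o + k ≤ o + d), show o + k - o = k from by omega,
      show d+d-1-(o+k) = (d-1-o) + (d-k) from by omega, pow_add, pow_add]
  ring

theorem sylvester_row {K : Type} [Field K] (d : ℕ) (a b : Fin (d+1) → K)
    (i j : Fin (d+d)) :
    sylvester d a b i j =
      if (i:ℕ) < d then
        (if (i:ℕ) ≤ (j:ℕ) ∧ (j:ℕ) ≤ (i:ℕ) + d then padCoef d a ((j:ℕ)-(i:ℕ)) else 0)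
      else
        (if (i:ℕ)-d ≤ (j:ℕ) ∧ (j:ℕ) ≤ ((i:ℕ)-d) + d then padCoef d b ((j:ℕ)-((i:ℕ)-d)) else 0) := by
  unfold sylvester padCoef
  split_ifs <;> first | rfl | (exfalso; omega)

theorem sylvester_mulVec {K : Type} [Field K] (d : ℕ) (a b : Fin (d+1) → K)
    (x y : K) (i : Fin (d+d)) :
    (sylvester d a b).mulVec (fun j : Fin (d+d) => x^(j:ℕ) * y^(d+d-1-(j:ℕ))) i =
      if (i:ℕ) < d then
        x^(i:ℕ) * y^(d-1-(i:ℕ)) * ∑ k : Fin (d+1), a k * x^(k:ℕ) * y^(d-(k:ℕ))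
      else
        x^((i:ℕ)-d) * y^(d-1-((i:ℕ)-d)) * ∑ k : Fin (d+1), b k * x^(k:ℕ) * y^(d-(k:ℕ)) := by
  have hfin : ∀ (c : Fin (d+1) → K),
      ∑ k ∈ Finset.range (d+1), padCoef d c k * (x^k * y^(d-k))
        = ∑ k : Fin (d+1), c k * x^(k:ℕ) * y^(d-(k:ℕ)) := by
    intro c
    rw [← Fin.sum_univ_eq_sum_range (fun k => padCoef d c k * (x^k * y^(d-k))) (d+1)]
    refine Finset.sum_congr rfl fun k _ => ?_
    unfold padCoef
    rw [dif_pos k.isLt, Fin.eta]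
    ring
  simp only [Matrix.mulVec, dotProduct]
  simp only [sylvester_row d a b i]
  split_ifs with hi
  · rw [Fin.sum_univ_eq_sum_range
      (fun j => (if (i:ℕ) ≤ j ∧ j ≤ (i:ℕ) + d then padCoef d a (j-(i:ℕ)) else 0)
        * (x^j * y^(d+d-1-j))) (d+d)]
    rw [rowsum x y d (i:ℕ) hi (padCoef d a), hfin a]
  · have hi' : (i:ℕ) - d < d := by have := i.isLt; omega
    rw [Fin.sum_univ_eq_sum_range
      (fun j => (if (i:ℕ)-d ≤ j ∧ j ≤ ((i:ℕ)-d) + d then padCoef d b (j-((i:ℕ)-d)) else 0)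
        * (x^j * y^(d+d-1-j))) (d+d)]
    rw [rowsum x y d ((i:ℕ)-d) hi' (padCoef d b), hfin b]



theorem key1 {K : Type} [Field K] (v : K → WithTop ℤ)
    (hv0 : v 0 = ⊤) (hvfin : ∀ x : K, x ≠ 0 → v x ≠ ⊤)
    (hvmul : ∀ x y : K, v (x * y) = v x + v y)
    (hvadd : ∀ x y : K, min (v x) (v y) ≤ v (x + y))
    (d : ℕ) (hd : 1 ≤ d) (a b : Fin (d+1) → K)
    (hint : ∀ i, 0 ≤ v (a i) ∧ 0 ≤ v (b i))
    (hgood : v (resultant d a b) = 0) (x y : K) (m₀ : ℤ)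
    (hx : (m₀ : WithTop ℤ) ≤ v x) (hy : (m₀ : WithTop ℤ) ≤ v y)
    (hor : v x = (m₀ : WithTop ℤ) ∨ v y = (m₀ : WithTop ℤ)) :
    min (v (∑ k : Fin (d+1), a k * x^(k:ℕ) * y^(d-(k:ℕ))))
        (v (∑ k : Fin (d+1), b k * x^(k:ℕ) * y^(d-(k:ℕ)))) ≤ ((d * m₀ : ℤ) : WithTop ℤ) := by
  classical
  set F := ∑ k : Fin (d+1), a k * x^(k:ℕ) * y^(d-(k:ℕ)) with hF
  set G := ∑ k : Fin (d+1), b k * x^(k:ℕ) * y^(d-(k:ℕ)) with hG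
  set M := min (v F) (v G) with hM
  set S := sylvester d a b with hS
  set w : Fin (d+d) → K := fun j => x^(j:ℕ) * y^(d+d-1-(j:ℕ)) with hw
  have hSw : ∀ i : Fin (d+d),
      ((((d:ℤ)-1) * m₀ : ℤ) : WithTop ℤ) + M ≤ v (S.mulVec w i) := by
    intro i
    rw [hS, sylvester_mulVec d a b x y i]
    split_ifs with hi
    · rw [hvmul, ← hF]
      refine add_le_add ?_ (min_le_left _ _)
      have h := my_vmono v hvfin hvmul x y m₀ hx hy (i:ℕ) (d-1-(i:ℕ))
      rwa [show (((i:ℕ) + (d-1-(i:ℕ)) : ℕ) : ℤ) = (d:ℤ)-1 from by omega] at h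
    · rw [hvmul, ← hG]
      refine add_le_add ?_ (min_le_right _ _)
      have h := my_vmono v hvfin hvmul x y m₀ hx hy ((i:ℕ)-d) (d-1-((i:ℕ)-d))
      have hi2 : (i:ℕ) - d < d := by have := i.isLt; omega
      rwa [show ((((i:ℕ)-d) + (d-1-((i:ℕ)-d)) : ℕ) : ℤ) = (d:ℤ)-1 from by omega] at h
  have hcram : ∀ r : Fin (d+d),
      resultant d a b * w r = ∑ i : Fin (d+d), S.adjugate r i * S.mulVec w i := by
    intro r
    have h1 : (S.adjugate * S).mulVec w = S.det • w := by
      rw [Matrix.adjugate_mul, Matrix.smul_mulVec, Matrix.one_mulVec]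
    have h2 := congrFun h1 r
    rw [← Matrix.mulVec_mulVec] at h2
    have h3 : (S.det • w) r = S.det * w r := rfl
    rw [h3] at h2
    rw [show resultant d a b = S.det from rfl, ← h2]
    simp [Matrix.mulVec, dotProduct]
  have hvwr : ∀ r : Fin (d+d),
      ((((d:ℤ)-1) * m₀ : ℤ) : WithTop ℤ) + M ≤ v (w r) := by
    intro r
    have h3 : v (resultant d a b * w r) = v (w r) := by rw [hvmul, hgood, zero_add]
    rw [← h3, hcram r]
    refine my_vsum v hv0 hvadd _ _ _ fun i _ => ?_
    rw [hvmul]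
    have hadj := my_vadjugate v hv0 hvfin hvmul hvadd S
      (fun i j => sylvester_entry_nonneg v hv0 d a b hint i j) r i
    calc ((((d:ℤ)-1) * m₀ : ℤ) : WithTop ℤ) + M
        = 0 + (((((d:ℤ)-1) * m₀ : ℤ) : WithTop ℤ) + M) := by rw [zero_add]
      _ ≤ v (S.adjugate r i) + v (S.mulVec w i) := add_le_add hadj (hSw i)
  have hconc : ∀ (_ : ((((d:ℤ)-1) * m₀ : ℤ) : WithTop ℤ) + M
      ≤ ((((d:ℤ)+d-1) * m₀ : ℤ) : WithTop ℤ)), M ≤ ((d * m₀ : ℤ) : WithTop ℤ) := by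
    intro h
    rcases eq_or_ne M ⊤ with hMt | hMt
    · rw [hMt] at h
      simp only [add_top, top_le_iff] at h
      exact absurd h (WithTop.coe_ne_top)
    · lift M to ℤ using hMt with M₀ hM₀
      rw [← WithTop.coe_add, WithTop.coe_le_coe] at h
      rw [WithTop.coe_le_coe]
      have hre : ((d:ℤ)+d-1) * m₀ - ((d:ℤ)-1) * m₀ = d * m₀ := by ring
      linarith
  rcases hor with hxe | hye
  · have hr := hvwr ⟨d+d-1, by omega⟩
    have hwr : v (w ⟨d+d-1, by omega⟩) = ((((d:ℤ)+d-1) * m₀ : ℤ) : WithTop ℤ) := by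
      show v (x^(d+d-1) * y^(d+d-1-(d+d-1))) = _
      rw [show d+d-1-(d+d-1) = 0 from by omega, pow_zero, mul_one,
        my_vpow_exact v hvfin hvmul x m₀ hxe (d+d-1)]
      congr 1
      rw [show ((d+d-1:ℕ):ℤ) = (d:ℤ)+d-1 from by omega]
    rw [hwr] at hr
    exact hconc hr
  · have hr := hvwr ⟨0, by omega⟩
    have hwr : v (w ⟨0, by omega⟩) = ((((d:ℤ)+d-1) * m₀ : ℤ) : WithTop ℤ) := by
      show v (x^(0:ℕ) * y^(d+d-1-0)) = _
      rw [pow_zero, one_mul, Nat.sub_zero,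
        my_vpow_exact v hvfin hvmul y m₀ hye (d+d-1)]
      congr 1
      rw [show ((d+d-1:ℕ):ℤ) = (d:ℤ)+d-1 from by omega]
    rw [hwr] at hr
    exact hconc hr



theorem tform {K : Type} [CommRing K] (x y x' y' : K) (j k e : ℕ) :
    x^(j+k) * y^e * x'^j * y'^(e+k) - x^j * y^(e+k) * x'^(j+k) * y'^e
      = (∑ t ∈ Finset.range k, (x*y')^t * (x'*y)^(k-1-t)) * (x*y' - x'*y)
        * ((x^j * y^e) * (x'^j * y'^e)) := by
  rw [geom_sum₂_mul]
  ring

theorem tbound {K : Type} [Field K] (v : K → WithTop ℤ)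
    (hv0 : v 0 = ⊤) (hvfin : ∀ x : K, x ≠ 0 → v x ≠ ⊤)
    (hvmul : ∀ x y : K, v (x * y) = v x + v y)
    (hvadd : ∀ x y : K, min (v x) (v y) ≤ v (x + y))
    (x y x' y' : K) (m₀ n₀ : ℤ)
    (hx : (m₀ : WithTop ℤ) ≤ v x) (hy : (m₀ : WithTop ℤ) ≤ v y)
    (hx' : (n₀ : WithTop ℤ) ≤ v x') (hy' : (n₀ : WithTop ℤ) ≤ v y')
    (j k e : ℕ) :
    v (x*y' - x'*y) + (((j+k+e-1 : ℕ) * (m₀+n₀) : ℤ) : WithTop ℤ)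
      ≤ v (x^(j+k) * y^e * x'^j * y'^(e+k) - x^j * y^(e+k) * x'^(j+k) * y'^e) := by
  rcases Nat.eq_zero_or_pos k with hk | hk
  · have h0 : x^(j+k) * y^e * x'^j * y'^(e+k) - x^j * y^(e+k) * x'^(j+k) * y'^e = 0 := by
      subst hk; ring
    rw [h0, hv0]; exact le_top
  · rw [tform, hvmul, hvmul]
    have hxy' : ((m₀+n₀ : ℤ) : WithTop ℤ) ≤ v (x*y') := by
      rw [hvmul, WithTop.coe_add]
      exact add_le_add hx hy'
    have hx'y : ((m₀+n₀ : ℤ) : WithTop ℤ) ≤ v (x'*y) := by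
      rw [hvmul, show ((m₀+n₀ : ℤ) : WithTop ℤ) = ((n₀ : WithTop ℤ) + (m₀ : WithTop ℤ)) from by
        rw [← WithTop.coe_add]; congr 1; ring]
      exact add_le_add hx' hy
    have hS : (((k-1:ℕ) * (m₀+n₀) : ℤ) : WithTop ℤ)
        ≤ v (∑ t ∈ Finset.range k, (x*y')^t * (x'*y)^(k-1-t)) := by
      refine my_vsum v hv0 hvadd _ _ _ fun t ht => ?_
      simp only [Finset.mem_range] at ht
      rw [hvmul]
      calc (((k-1:ℕ) * (m₀+n₀) : ℤ) : WithTop ℤ)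
          = ((t * (m₀+n₀) : ℤ) : WithTop ℤ) + (((k-1-t:ℕ) * (m₀+n₀) : ℤ) : WithTop ℤ) := by
            rw [← WithTop.coe_add]
            congr 1
            rw [show ((k-1:ℕ):ℤ) = (t:ℤ) + ((k-1-t:ℕ):ℤ) from by omega]
            ring
        _ ≤ v ((x*y')^t) + v ((x'*y)^(k-1-t)) :=
            add_le_add (my_vpow_le v hvfin hvmul _ _ hxy' t)
              (my_vpow_le v hvfin hvmul _ _ hx'y (k-1-t))
    have hP : (((j+e:ℕ) * m₀ + (j+e:ℕ) * n₀ : ℤ) : WithTop ℤ)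
        ≤ v ((x^j * y^e) * (x'^j * y'^e)) := by
      rw [hvmul, WithTop.coe_add]
      exact add_le_add (my_vmono v hvfin hvmul x y m₀ hx hy j e)
        (my_vmono v hvfin hvmul x' y' n₀ hx' hy' j e)
    calc v (x*y' - x'*y) + (((j+k+e-1 : ℕ) * (m₀+n₀) : ℤ) : WithTop ℤ)
        = (((k-1:ℕ) * (m₀+n₀) : ℤ) : WithTop ℤ) + v (x*y' - x'*y)
            + (((j+e:ℕ) * m₀ + (j+e:ℕ) * n₀ : ℤ) : WithTop ℤ) := by
          rw [show (((j+k+e-1 : ℕ) * (m₀+n₀) : ℤ) : WithTop ℤ)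
              = (((k-1:ℕ) * (m₀+n₀) : ℤ) : WithTop ℤ)
                + (((j+e:ℕ) * m₀ + (j+e:ℕ) * n₀ : ℤ) : WithTop ℤ) from by
            rw [← WithTop.coe_add]
            congr 1
            rw [show ((j+k+e-1:ℕ):ℤ) = ((k-1:ℕ):ℤ) + ((j+e:ℕ):ℤ) from by omega]
            ring]
          rw [← add_assoc, add_comm (v (x*y' - x'*y))]
      _ ≤ v (∑ t ∈ Finset.range k, (x*y')^t * (x'*y)^(k-1-t)) + v (x*y' - x'*y)
            + v ((x^j * y^e) * (x'^j * y'^e)) :=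
          add_le_add (add_le_add hS le_rfl) hP

theorem key2 {K : Type} [Field K] (v : K → WithTop ℤ)
    (hv0 : v 0 = ⊤) (hvfin : ∀ x : K, x ≠ 0 → v x ≠ ⊤)
    (hvmul : ∀ x y : K, v (x * y) = v x + v y)
    (hvadd : ∀ x y : K, min (v x) (v y) ≤ v (x + y))
    (d : ℕ) (a b : Fin (d+1) → K)
    (hint : ∀ i, 0 ≤ v (a i) ∧ 0 ≤ v (b i))
    (x y x' y' : K) (m₀ n₀ : ℤ)
    (hx : (m₀ : WithTop ℤ) ≤ v x) (hy : (m₀ : WithTop ℤ) ≤ v y)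
    (hx' : (n₀ : WithTop ℤ) ≤ v x') (hy' : (n₀ : WithTop ℤ) ≤ v y') :
    v (x*y' - x'*y) + (((d-1 : ℕ) * (m₀+n₀) : ℤ) : WithTop ℤ)
      ≤ v ((∑ k : Fin (d+1), a k * x^(k:ℕ) * y^(d-(k:ℕ)))
            * (∑ k : Fin (d+1), b k * x'^(k:ℕ) * y'^(d-(k:ℕ)))
          - (∑ k : Fin (d+1), a k * x'^(k:ℕ) * y'^(d-(k:ℕ)))
            * (∑ k : Fin (d+1), b k * x^(k:ℕ) * y^(d-(k:ℕ)))) := by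
  have expand : (∑ k : Fin (d+1), a k * x^(k:ℕ) * y^(d-(k:ℕ)))
            * (∑ k : Fin (d+1), b k * x'^(k:ℕ) * y'^(d-(k:ℕ)))
          - (∑ k : Fin (d+1), a k * x'^(k:ℕ) * y'^(d-(k:ℕ)))
            * (∑ k : Fin (d+1), b k * x^(k:ℕ) * y^(d-(k:ℕ)))
      = ∑ i : Fin (d+1), ∑ j : Fin (d+1), a i * b j *
          (x^(i:ℕ) * y^(d-(i:ℕ)) * x'^(j:ℕ) * y'^(d-(j:ℕ))
            - x^(j:ℕ) * y^(d-(j:ℕ)) * x'^(i:ℕ) * y'^(d-(i:ℕ))) := by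
    rw [Finset.sum_mul_sum, Finset.sum_mul_sum, ← Finset.sum_sub_distrib]
    refine Finset.sum_congr rfl fun i _ => ?_
    rw [← Finset.sum_sub_distrib]
    refine Finset.sum_congr rfl fun j _ => ?_
    ring
  rw [expand]
  refine my_vsum v hv0 hvadd _ _ _ fun i _ => my_vsum v hv0 hvadd _ _ _ fun j _ => ?_
  rw [hvmul, hvmul]
  have hkey : v (x*y' - x'*y) + (((d-1 : ℕ) * (m₀+n₀) : ℤ) : WithTop ℤ)
      ≤ v (x^(i:ℕ) * y^(d-(i:ℕ)) * x'^(j:ℕ) * y'^(d-(j:ℕ))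
            - x^(j:ℕ) * y^(d-(j:ℕ)) * x'^(i:ℕ) * y'^(d-(i:ℕ))) := by
    rcases le_or_gt (j:ℕ) (i:ℕ) with hji | hij
    · have ht := tbound v hv0 hvfin hvmul hvadd x y x' y' m₀ n₀ hx hy hx' hy'
        (j:ℕ) ((i:ℕ)-(j:ℕ)) (d-(i:ℕ))
      have hid : (i:ℕ) ≤ d := by omega
      rw [show (j:ℕ) + ((i:ℕ)-(j:ℕ)) = (i:ℕ) from by omega,
          show (d-(i:ℕ)) + ((i:ℕ)-(j:ℕ)) = d-(j:ℕ) from by omega,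
          show (i:ℕ) + (d-(i:ℕ)) - 1 = d-1 from by omega] at ht
      exact ht
    · have ht := tbound v hv0 hvfin hvmul hvadd x y x' y' m₀ n₀ hx hy hx' hy'
        (i:ℕ) ((j:ℕ)-(i:ℕ)) (d-(j:ℕ))
      have hjd : (j:ℕ) ≤ d := by omega
      rw [show (i:ℕ) + ((j:ℕ)-(i:ℕ)) = (j:ℕ) from by omega,
          show (d-(j:ℕ)) + ((j:ℕ)-(i:ℕ)) = d-(i:ℕ) from by omega,
          show (j:ℕ) + (d-(j:ℕ)) - 1 = d-1 from by omega] at ht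
      rw [show x^(i:ℕ) * y^(d-(i:ℕ)) * x'^(j:ℕ) * y'^(d-(j:ℕ))
            - x^(j:ℕ) * y^(d-(j:ℕ)) * x'^(i:ℕ) * y'^(d-(i:ℕ))
          = -(x^(j:ℕ) * y^(d-(j:ℕ)) * x'^(i:ℕ) * y'^(d-(i:ℕ))
            - x^(i:ℕ) * y^(d-(i:ℕ)) * x'^(j:ℕ) * y'^(d-(j:ℕ))) from by ring,
        my_vneg v hvfin hvmul]
      exact ht
  calc v (x*y' - x'*y) + (((d-1 : ℕ) * (m₀+n₀) : ℤ) : WithTop ℤ)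
      ≤ v (x^(i:ℕ) * y^(d-(i:ℕ)) * x'^(j:ℕ) * y'^(d-(j:ℕ))
            - x^(j:ℕ) * y^(d-(j:ℕ)) * x'^(i:ℕ) * y'^(d-(i:ℕ))) := hkey
    _ = 0 + 0 + v (x^(i:ℕ) * y^(d-(i:ℕ)) * x'^(j:ℕ) * y'^(d-(j:ℕ))
            - x^(j:ℕ) * y^(d-(j:ℕ)) * x'^(i:ℕ) * y'^(d-(i:ℕ))) := by
        rw [zero_add, zero_add]
    _ ≤ v (a i) + v (b j) + v (x^(i:ℕ) * y^(d-(i:ℕ)) * x'^(j:ℕ) * y'^(d-(j:ℕ))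
            - x^(j:ℕ) * y^(d-(j:ℕ)) * x'^(i:ℕ) * y'^(d-(i:ℕ))) :=
        add_le_add (add_le_add (hint i).1 (hint j).2) le_rfl


/-- Let `v` be a discrete valuation on `K` and let `φ = [F:G]` be a morphism of `ℙ¹`
of degree `d ≥ 1`, written in `v`-reduced form (all coefficients of `F`, `G` in the
valuation ring, at least one a `v`-unit) and with good reduction at `v`
(`Res(F,G)` is a `v`-unit).  Then `δ_v(φ(P), φ(Q)) ≥ δ_v(P, Q)` for all
`P, Q ∈ ℙ¹(K)`. -/
theorem logDist_le_of_good_reduction {K : Type} [Field K] (v : K → WithTop ℤ)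
    (hv0 : v 0 = ⊤) (hvfin : ∀ x : K, x ≠ 0 → v x ≠ ⊤)
    (hvmul : ∀ x y : K, v (x * y) = v x + v y)
    (hvadd : ∀ x y : K, min (v x) (v y) ≤ v (x + y))
    (hvdisc : ∀ n : ℤ, ∃ x : K, v x = (n : WithTop ℤ))
    (d : ℕ) (hd : 1 ≤ d) (a b : Fin (d+1) → K)
    (hint : ∀ i, 0 ≤ v (a i) ∧ 0 ≤ v (b i))
    (hred : (∃ i, v (a i) = 0) ∨ (∃ i, v (b i) = 0))
    (hgood : v (resultant d a b) = 0)
    (P Q : K × K) (hP : P ≠ (0, 0)) (hQ : Q ≠ (0, 0)) :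
    logDist v P Q ≤ logDist v (evalPair d a b P) (evalPair d a b Q) := by
  -- extract finite minima of coordinate valuations
  have hne : ∀ (R : K × K), R ≠ (0,0) → min (v R.1) (v R.2) ≠ ⊤ := by
    intro R hR
    rcases eq_or_ne R.1 0 with h1 | h1
    · have h2 : R.2 ≠ 0 := by
        intro h2
        exact hR (Prod.ext h1 h2)
      exact ne_top_of_le_ne_top (hvfin R.2 h2) (min_le_right _ _)
    · exact ne_top_of_le_ne_top (hvfin R.1 h1) (min_le_left _ _)
  obtain ⟨m₀, hm⟩ := WithTop.ne_top_iff_exists.mp (hne P hP)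
  obtain ⟨n₀, hn⟩ := WithTop.ne_top_iff_exists.mp (hne Q hQ)
  replace hm := hm.symm
  replace hn := hn.symm
  have hx : (m₀ : WithTop ℤ) ≤ v P.1 := hm ▸ min_le_left _ _
  have hy : (m₀ : WithTop ℤ) ≤ v P.2 := hm ▸ min_le_right _ _
  have hx' : (n₀ : WithTop ℤ) ≤ v Q.1 := hn ▸ min_le_left _ _
  have hy' : (n₀ : WithTop ℤ) ≤ v Q.2 := hn ▸ min_le_right _ _
  have horP : v P.1 = (m₀ : WithTop ℤ) ∨ v P.2 = (m₀ : WithTop ℤ) := by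
    rcases min_cases (v P.1) (v P.2) with ⟨h1, _⟩ | ⟨h1, _⟩
    · exact Or.inl (h1.symm.trans hm)
    · exact Or.inr (h1.symm.trans hm)
  have horQ : v Q.1 = (n₀ : WithTop ℤ) ∨ v Q.2 = (n₀ : WithTop ℤ) := by
    rcases min_cases (v Q.1) (v Q.2) with ⟨h1, _⟩ | ⟨h1, _⟩
    · exact Or.inl (h1.symm.trans hn)
    · exact Or.inr (h1.symm.trans hn)
  have hMP := key1 v hv0 hvfin hvmul hvadd d hd a b hint hgood P.1 P.2 m₀ hx hy horP
  have hMQ := key1 v hv0 hvfin hvmul hvadd d hd a b hint hgood Q.1 Q.2 n₀ hx' hy' horQ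
  have hD := key2 v hv0 hvfin hvmul hvadd d a b hint P.1 P.2 Q.1 Q.2 m₀ n₀ hx hy hx' hy'
  simp only [logDist, evalPair]
  rw [hm, hn]
  -- names for the various quantities
  have hMPne : min (v (∑ k : Fin (d+1), a k * P.1^(k:ℕ) * P.2^(d-(k:ℕ))))
      (v (∑ k : Fin (d+1), b k * P.1^(k:ℕ) * P.2^(d-(k:ℕ)))) ≠ ⊤ :=
    ne_top_of_le_ne_top WithTop.coe_ne_top hMP
  have hMQne : min (v (∑ k : Fin (d+1), a k * Q.1^(k:ℕ) * Q.2^(d-(k:ℕ))))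
      (v (∑ k : Fin (d+1), b k * Q.1^(k:ℕ) * Q.2^(d-(k:ℕ)))) ≠ ⊤ :=
    ne_top_of_le_ne_top WithTop.coe_ne_top hMQ
  obtain ⟨M₀, hM₀⟩ := WithTop.ne_top_iff_exists.mp hMPne
  obtain ⟨N₀, hN₀⟩ := WithTop.ne_top_iff_exists.mp hMQne
  rw [← hM₀, ← hN₀]
  rw [← hM₀, WithTop.coe_le_coe] at hMP
  rw [← hN₀, WithTop.coe_le_coe] at hMQ
  rcases eq_or_ne (v (P.1 * Q.2 - Q.1 * P.2)) ⊤ with hDt | hDt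
  · have hD't : v ((∑ k : Fin (d+1), a k * P.1^(k:ℕ) * P.2^(d-(k:ℕ)))
        * (∑ k : Fin (d+1), b k * Q.1^(k:ℕ) * Q.2^(d-(k:ℕ)))
        - (∑ k : Fin (d+1), a k * Q.1^(k:ℕ) * Q.2^(d-(k:ℕ)))
        * (∑ k : Fin (d+1), b k * P.1^(k:ℕ) * P.2^(d-(k:ℕ)))) = ⊤ := by
      rw [hDt, top_add] at hD
      exact top_le_iff.mp hD
    rw [hDt, hD't, WithTop.LinearOrderedAddCommGroup.top_sub, WithTop.LinearOrderedAddCommGroup.top_sub, WithTop.LinearOrderedAddCommGroup.top_sub,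
      WithTop.LinearOrderedAddCommGroup.top_sub]
  · obtain ⟨D₀, hD₀⟩ := WithTop.ne_top_iff_exists.mp hDt
    rcases eq_or_ne (v ((∑ k : Fin (d+1), a k * P.1^(k:ℕ) * P.2^(d-(k:ℕ)))
        * (∑ k : Fin (d+1), b k * Q.1^(k:ℕ) * Q.2^(d-(k:ℕ)))
        - (∑ k : Fin (d+1), a k * Q.1^(k:ℕ) * Q.2^(d-(k:ℕ)))
        * (∑ k : Fin (d+1), b k * P.1^(k:ℕ) * P.2^(d-(k:ℕ))))) ⊤ with hD't | hD't
    · rw [hD't, WithTop.LinearOrderedAddCommGroup.top_sub, WithTop.LinearOrderedAddCommGroup.top_sub]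
      exact le_top
    · obtain ⟨D₀', hD₀'⟩ := WithTop.ne_top_iff_exists.mp hD't
      rw [← hD₀, ← hD₀'] at hD ⊢
      rw [← WithTop.coe_add, WithTop.coe_le_coe] at hD
      rw [← WithTop.LinearOrderedAddCommGroup.coe_sub, ← WithTop.LinearOrderedAddCommGroup.coe_sub, ← WithTop.LinearOrderedAddCommGroup.coe_sub, ← WithTop.LinearOrderedAddCommGroup.coe_sub,
        WithTop.coe_le_coe]
      have hdd : ((d-1:ℕ):ℤ) = (d:ℤ) - 1 := by omega
      rw [hdd] at hD
      have hrng : ((d:ℤ)-1)*(m₀+n₀) = d*m₀ + d*n₀ - m₀ - n₀ := by ring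
      linarith
end
end

section
/- Let φ: ℙ¹ → ℙ¹ be a morphism defined over K with good reduction at a place v, and let P ∈ ℙ¹(K) be a periodic point for φ with minimal period n. Then for all integers i, j, k, one has δ_v(φ^i(P), φ^j(P)) = δ_v(φ^{i+k}(P), φ^{j+k}(P)), where exponents are taken modulo n. -/
noncomputable section

/-- The map `φ = [F:G]` has good reduction at the place `v`: after multiplying `F`
and `G` by a suitable nonzero scalar `u` (so as to be in `v`-reduced form: all
coefficients in the valuation ring of `v` and at least one of them a `v`-unit), the
resultant `Res(uF, uG)` is a `v`-unit. -/
def GoodReduction {K : Type} [Field K] (v : K → WithTop ℤ) (d : ℕ)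
    (a b : Fin (d+1) → K) : Prop :=
  ∃ u : K, u ≠ 0 ∧ (∀ i, 0 ≤ v (u * a i) ∧ 0 ≤ v (u * b i)) ∧
    ((∃ i, v (u * a i) = 0) ∨ (∃ i, v (u * b i) = 0)) ∧
    v (resultant d (fun i => u * a i) (fun i => u * b i)) = 0

/-! In normalized coordinates (integral, with a coordinate of valuation `0`) one has
`δ_v(P, Q) = v(x₁y₂ - x₂y₁)`. Good reduction means `φ = [F : G]` maps normalized coordinates
to normalized coordinates: the adjugate of the Sylvester matrix writes `Res · x^(2d-1)` and
`Res · y^(2d-1)` as integral combinations of `F(x, y)` and `G(x, y)`. Moreover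
`F(P)G(Q) - F(Q)G(P)` is `x₁y₂ - x₂y₁` times an integral polynomial, so
`δ_v(P, Q) ≤ δ_v(φP, φQ)`. Along the orbit, `t ↦ δ_v(φ^(i+t) P, φ^(j+t) P)` is therefore
monotone, and it is `n`-periodic because `φ^n P` is a multiple of `P`; hence it is constant. -/

open Finset Matrix

section BinaryForm

variable {R : Type} [CommRing R] {d : ℕ}

def binForm (d : ℕ) (a : Fin (d+1) → R) (P : R × R) : R :=
  ∑ i : Fin (d+1), a i * P.1 ^ (i:ℕ) * P.2 ^ (d - (i:ℕ))

lemma evalPair_eq (a b : Fin (d+1) → R) (P : R × R) :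
    evalPair d a b P = (binForm d a P, binForm d b P) := rfl

lemma binForm_smul (a : Fin (d+1) → R) (c : R) (P : R × R) :
    binForm d a (c • P) = c ^ d * binForm d a P := by
  simp only [binForm, Prod.smul_fst, Prod.smul_snd, smul_eq_mul, mul_sum]
  refine sum_congr rfl fun i _ => ?_
  rw [show c ^ d = c ^ (i:ℕ) * c ^ (d - i) by
    rw [← pow_add, Nat.add_sub_cancel' (Nat.lt_succ_iff.mp i.isLt)]]
  ring

lemma binForm_const_mul (a : Fin (d+1) → R) (u : R) (P : R × R) :
    binForm d (fun i => u * a i) P = u * binForm d a P := by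
  simp only [binForm, mul_sum, mul_assoc]

lemma evalPair_smul (a b : Fin (d+1) → R) (c : R) (P : R × R) :
    evalPair d a b (c • P) = c ^ d • evalPair d a b P := by
  simp only [evalPair_eq, binForm_smul, Prod.smul_mk, smul_eq_mul]

lemma iterate_evalPair_smul (a b : Fin (d+1) → R) (c : R) (P : R × R) (t : ℕ) :
    (evalPair d a b)^[t] (c • P) = c ^ d ^ t • (evalPair d a b)^[t] P := by
  induction t with
  | zero => simp
  | succ t ih =>
    rw [Function.iterate_succ_apply', Function.iterate_succ_apply', ih, evalPair_smul, ← pow_mul,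
      pow_succ]

lemma evalPair_const_mul (a b : Fin (d+1) → R) (u : R) (P : R × R) :
    evalPair d (fun i => u * a i) (fun i => u * b i) P = u • evalPair d a b P := by
  simp only [evalPair_eq, binForm_const_mul, Prod.smul_mk, smul_eq_mul]

lemma evalPair_zero (hd : d ≠ 0) (a b : Fin (d+1) → R) : evalPair d a b 0 = 0 := by
  have h : ∀ i : Fin (d+1), (0 : R) ^ (i:ℕ) * 0 ^ (d - i) = 0 := fun i => by
    rw [← pow_add, Nat.add_sub_cancel' (Nat.lt_succ_iff.mp i.isLt), zero_pow hd]
  simp only [evalPair_eq, binForm, Prod.fst_zero, Prod.snd_zero, mul_assoc, h, mul_zero,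
    sum_const_zero, Prod.mk_zero_zero]

def monomialVec (d : ℕ) (P : R × R) : Fin (d+d) → R :=
  fun j => P.1 ^ (j:ℕ) * P.2 ^ (d + d - 1 - j)

lemma sum_shiftedRow_mul_monomialVec (c : Fin (d+1) → R) {s e : ℕ} (he : e = s + d)
    (hs : s < d) (P : R × R) :
    ∑ j : Fin (d+d), (if h : s ≤ (j:ℕ) ∧ (j:ℕ) ≤ e then c ⟨j - s, by omega⟩ else 0) *
        monomialVec d P j =
      P.1 ^ s * P.2 ^ (d - 1 - s) * binForm d c P := by
  rw [binForm, mul_sum]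
  symm
  refine Fintype.sum_of_injective (fun t : Fin (d+1) => (⟨s + t, by omega⟩ : Fin (d+d)))
    (fun t t' h => Fin.ext (by simpa using h)) _ _ (fun j hj => ?_) (fun t => ?_)
  · rw [dif_neg, zero_mul]
    rintro ⟨h1, h2⟩
    exact hj ⟨⟨j - s, by omega⟩, Fin.ext (by dsimp only; omega)⟩
  · have ht := t.isLt
    rw [dif_pos (by dsimp only; omega)]
    simp only [monomialVec, Nat.add_sub_cancel_left, Fin.eta, pow_add]
    rw [show d + d - 1 - (s + t) = (d - 1 - s) + (d - t) by omega, pow_add]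
    ring

lemma sylvester_mulVec_monomialVec (a b : Fin (d+1) → R) (P : R × R) (i : Fin (d+d)) :
    (sylvester d a b *ᵥ monomialVec d P) i =
      if (i:ℕ) < d then P.1 ^ (i:ℕ) * P.2 ^ (d - 1 - i) * binForm d a P
      else P.1 ^ ((i:ℕ) - d) * P.2 ^ (d - 1 - (i - d)) * binForm d b P := by
  simp only [Matrix.mulVec, dotProduct, sylvester]
  split_ifs with hi
  · exact sum_shiftedRow_mul_monomialVec a rfl hi P
  · exact sum_shiftedRow_mul_monomialVec b (by omega) (by omega) P

end BinaryForm

lemma WithTop.coe_add_sub_coe_add (g : ℤ) (x y : WithTop ℤ) :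
    ((g : WithTop ℤ) + x) - (g + y) = x - y := by
  cases x <;> cases y <;> simp [← WithTop.coe_add, ← WithTop.LinearOrderedAddCommGroup.coe_sub]

lemma Monotone.eq_apply_zero_of_periodic {α : Type*} [PartialOrder α] {f : ℕ → α}
    (hf : Monotone f) {n : ℕ} (hp : Function.Periodic f n) (hn : 0 < n) (k : ℕ) : f k = f 0 :=
  le_antisymm ((hf (Nat.le_mul_of_pos_right k hn)).trans_eq (by simpa using hp.nat_mul_eq k))
    (hf (Nat.zero_le k))

namespace AddValuation

section Integral

variable {R : Type} {Γ₀ : Type*} [CommRing R] [LinearOrderedAddCommMonoidWithTop Γ₀]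
  (v : AddValuation R Γ₀) {d : ℕ} {a b : Fin (d+1) → R}

lemma le_map_sub_pow_sub_pow {x y : R} (hx : 0 ≤ v x) (hy : 0 ≤ v y) (k : ℕ) :
    v (x - y) ≤ v (x ^ k - y ^ k) := by
  rw [← geom_sum₂_mul, v.map_mul]
  refine le_add_of_nonneg_left (v.map_le_sum fun i _ => ?_)
  rw [v.map_mul, v.map_pow, v.map_pow]
  exact add_nonneg (nsmul_nonneg hx _) (nsmul_nonneg hy _)

lemma map_sub_le_map_monomial_cross {P Q : R × R} (hP : 0 ≤ min (v P.1) (v P.2))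
    (hQ : 0 ≤ min (v Q.1) (v Q.2)) {i j : ℕ} (hi : i ≤ d) (hj : j ≤ d) :
    v (P.1 * Q.2 - Q.1 * P.2) ≤
      v (P.1 ^ i * P.2 ^ (d - i) * (Q.1 ^ j * Q.2 ^ (d - j)) -
        Q.1 ^ i * Q.2 ^ (d - i) * (P.1 ^ j * P.2 ^ (d - j))) := by
  wlog hij : i ≤ j generalizing i j
  · convert this hj hi (le_of_not_ge hij) using 1
    rw [← v.map_neg]
    congr 1
    ring
  obtain ⟨hP1, hP2⟩ := le_min_iff.1 hP
  obtain ⟨hQ1, hQ2⟩ := le_min_iff.1 hQ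
  obtain ⟨k, rfl⟩ := Nat.exists_eq_add_of_le hij
  obtain ⟨l, rfl⟩ := Nat.exists_eq_add_of_le hj
  rw [show i + k + l - i = k + l by omega, show i + k + l - (i + k) = l by omega,
    show P.1 ^ i * P.2 ^ (k + l) * (Q.1 ^ (i + k) * Q.2 ^ l) -
        Q.1 ^ i * Q.2 ^ (k + l) * (P.1 ^ (i + k) * P.2 ^ l) =
      (P.1 * Q.1) ^ i * (P.2 * Q.2) ^ l * ((Q.1 * P.2) ^ k - (P.1 * Q.2) ^ k) by ring,
    v.map_mul, v.map_sub_swap]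
  refine le_add_of_nonneg_of_le ?_ (v.le_map_sub_pow_sub_pow ?_ ?_ k)
  · simp only [v.map_mul, v.map_pow]
    exact add_nonneg (nsmul_nonneg (add_nonneg hP1 hQ1) _) (nsmul_nonneg (add_nonneg hP2 hQ2) _)
  · rw [v.map_mul]; exact add_nonneg hQ1 hP2
  · rw [v.map_mul]; exact add_nonneg hP1 hQ2

lemma map_sub_le_map_binForm_cross (ha : ∀ i, 0 ≤ v (a i)) (hb : ∀ i, 0 ≤ v (b i))
    {P Q : R × R} (hP : 0 ≤ min (v P.1) (v P.2)) (hQ : 0 ≤ min (v Q.1) (v Q.2)) :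
    v (P.1 * Q.2 - Q.1 * P.2) ≤
      v (binForm d a P * binForm d b Q - binForm d a Q * binForm d b P) := by
  have hexpand : binForm d a P * binForm d b Q - binForm d a Q * binForm d b P =
      ∑ i : Fin (d+1), ∑ j : Fin (d+1), a i * b j *
        (P.1 ^ (i:ℕ) * P.2 ^ (d - i) * (Q.1 ^ (j:ℕ) * Q.2 ^ (d - j)) -
          Q.1 ^ (i:ℕ) * Q.2 ^ (d - i) * (P.1 ^ (j:ℕ) * P.2 ^ (d - j))) := by
    simp only [binForm, sum_mul_sum, ← sum_sub_distrib]
    exact sum_congr rfl fun i _ => sum_congr rfl fun j _ => by ring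
  rw [hexpand]
  refine v.map_le_sum fun i _ => v.map_le_sum fun j _ => ?_
  rw [v.map_mul, v.map_mul]
  exact le_add_of_nonneg_of_le (add_nonneg (ha i) (hb j))
    (v.map_sub_le_map_monomial_cross hP hQ (Nat.lt_succ_iff.1 i.isLt) (Nat.lt_succ_iff.1 j.isLt))

lemma le_map_binForm (ha : ∀ i, 0 ≤ v (a i)) {P : R × R} (hP : 0 ≤ min (v P.1) (v P.2)) :
    0 ≤ v (binForm d a P) := by
  obtain ⟨hP1, hP2⟩ := le_min_iff.1 hP
  refine v.map_le_sum fun i _ => ?_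
  simp only [v.map_mul, v.map_pow]
  exact add_nonneg (add_nonneg (ha i) (nsmul_nonneg hP1 _)) (nsmul_nonneg hP2 _)

lemma le_map_sylvester (ha : ∀ i, 0 ≤ v (a i)) (hb : ∀ i, 0 ≤ v (b i)) (i j : Fin (d+d)) :
    0 ≤ v (sylvester d a b i j) := by
  unfold sylvester
  split_ifs <;> simp [ha, hb]

end Integral

section Normalized

variable {R : Type} {Γ₀ : Type*} [CommRing R] [LinearOrderedAddCommGroupWithTop Γ₀]
  (v : AddValuation R Γ₀) {d : ℕ} {a b : Fin (d+1) → R}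

def IsNormalized (P : R × R) : Prop := min (v P.1) (v P.2) = 0

lemma le_map_of_le_map_mulVec {n : Type*} [Fintype n] [DecidableEq n] {M : Matrix n n R}
    (hM : ∀ i j, 0 ≤ v (M i j)) (hdet : v M.det = 0) {w : n → R} {g : Γ₀}
    (hg : ∀ i, g ≤ v ((M *ᵥ w) i)) (j : n) : g ≤ v (w j) := by
  have hadj : ∀ i j, 0 ≤ v (M.adjugate i j) := by
    let N : Matrix n n (Valuation.integer (toValuation v)) := fun i j => ⟨M i j, hM i j⟩
    have hN : (Valuation.integer (toValuation v)).subtype.mapMatrix N = M := rfl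
    intro i j
    rw [← hN, ← RingHom.map_adjugate]
    exact (N.adjugate i j).2
  have hcramer : M.adjugate *ᵥ (M *ᵥ w) = M.det • w := by
    rw [Matrix.mulVec_mulVec, Matrix.adjugate_mul, Matrix.smul_mulVec, Matrix.one_mulVec]
  calc g ≤ v ((M.adjugate *ᵥ (M *ᵥ w)) j) :=
        v.map_le_sum fun i _ => (v.map_mul _ _).symm ▸ le_add_of_nonneg_of_le (hadj j i) (hg i)
    _ = v (w j) := by rw [hcramer, Pi.smul_apply, smul_eq_mul, v.map_mul, hdet, zero_add]

lemma isNormalized_evalPair (hd : 1 ≤ d) (ha : ∀ i, 0 ≤ v (a i)) (hb : ∀ i, 0 ≤ v (b i))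
    (hres : v (resultant d a b) = 0) {P : R × R} (hP : v.IsNormalized P) :
    v.IsNormalized (evalPair d a b P) := by
  obtain ⟨hP1, hP2⟩ := le_min_iff.1 hP.ge
  change min (v (binForm d a P)) (v (binForm d b P)) = 0
  refine le_antisymm ?_ (le_min (v.le_map_binForm ha hP.ge) (v.le_map_binForm hb hP.ge))
  have hmonomial :
      ∀ j, min (v (binForm d a P)) (v (binForm d b P)) ≤ v (monomialVec d P j) := by
    refine v.le_map_of_le_map_mulVec (v.le_map_sylvester ha hb) hres fun i => ?_
    rw [sylvester_mulVec_monomialVec]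
    split_ifs
    all_goals
      simp only [v.map_mul, v.map_pow]
      refine le_add_of_nonneg_of_le (add_nonneg (nsmul_nonneg hP1 _) (nsmul_nonneg hP2 _)) ?_
    exacts [min_le_left _ _, min_le_right _ _]
  -- the monomial `x^(2d-1)` or `y^(2d-1)` of the coordinate of valuation `0` is a unit
  rcases min_eq_iff.1 hP with ⟨h1, -⟩ | ⟨h2, -⟩
  · simpa [monomialVec, v.map_mul, v.map_pow, h1] using hmonomial ⟨d + d - 1, by omega⟩
  · simpa [monomialVec, v.map_mul, v.map_pow, h2] using hmonomial ⟨0, by omega⟩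

end Normalized

variable {K : Type} [Field K]

lemma exists_isNormalized_smul {Γ₀ : Type*} [LinearOrderedAddCommGroupWithTop Γ₀]
    (v : AddValuation K Γ₀) {P : K × K} (hP : P ≠ 0) :
    ∃ c : K, c ≠ 0 ∧ v.IsNormalized (c • P) := by
  have key : ∀ x y : K, x ≠ 0 → v x ≤ v y → min (v (x⁻¹ * x)) (v (x⁻¹ * y)) = 0 := by
    intro x y hx hxy
    rw [v.map_mul, v.map_mul, min_add_add_left, min_eq_left hxy, ← v.map_mul,
      inv_mul_cancel₀ hx, v.map_one]
  have hne : P.1 ≠ 0 ∨ P.2 ≠ 0 := by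
    by_contra! h
    exact hP (Prod.ext h.1 h.2)
  rcases le_total (v P.1) (v P.2) with h | h
  · have h1 : P.1 ≠ 0 := fun h1 => by
      rw [h1, v.map_zero, top_le_iff, v.top_iff] at h
      exact hne.elim (· h1) (· h)
    exact ⟨P.1⁻¹, inv_ne_zero h1, key _ _ h1 h⟩
  · have h2 : P.2 ≠ 0 := fun h2 => by
      rw [h2, v.map_zero, top_le_iff, v.top_iff] at h
      exact hne.elim (· h) (· h2)
    exact ⟨P.2⁻¹, inv_ne_zero h2, (min_comm _ _).trans (key _ _ h2 h)⟩

variable (v : AddValuation K (WithTop ℤ))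

lemma logDist_smul_left {c : K} (hc : c ≠ 0) (P Q : K × K) :
    logDist v (c • P) Q = logDist v P Q := by
  obtain ⟨g, hg⟩ := WithTop.ne_top_iff_exists.1 (v.ne_top_iff.2 hc)
  simp only [logDist, Prod.smul_fst, Prod.smul_snd, smul_eq_mul]
  rw [show c * P.1 * Q.2 - Q.1 * (c * P.2) = c * (P.1 * Q.2 - Q.1 * P.2) by ring,
    v.map_mul, v.map_mul, v.map_mul, min_add_add_left, ← hg, WithTop.coe_add_sub_coe_add]

lemma logDist_comm (P Q : K × K) : logDist v P Q = logDist v Q P := by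
  rw [logDist, logDist, v.map_sub_swap]
  simp only [sub_eq_add_neg]
  rw [add_right_comm]

lemma logDist_smul_right {c : K} (hc : c ≠ 0) (P Q : K × K) :
    logDist v P (c • Q) = logDist v P Q := by
  rw [logDist_comm, logDist_smul_left v hc, logDist_comm]

lemma logDist_zero_left (Q : K × K) : logDist v 0 Q = ⊤ := by
  simp [logDist]

lemma logDist_of_isNormalized {P Q : K × K} (hP : v.IsNormalized P) (hQ : v.IsNormalized Q) :
    logDist v P Q = v (P.1 * Q.2 - Q.1 * P.2) := by
  rw [logDist, hP, hQ, sub_zero, sub_zero]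

variable {d : ℕ} {a b : Fin (d+1) → K}

theorem logDist_le_logDist_evalPair (hd : 1 ≤ d) (ha : ∀ i, 0 ≤ v (a i))
    (hb : ∀ i, 0 ≤ v (b i)) (hres : v (resultant d a b) = 0) (P Q : K × K) :
    logDist v P Q ≤ logDist v (evalPair d a b P) (evalPair d a b Q) := by
  have hφ0 : evalPair d a b 0 = 0 := evalPair_zero (by omega) a b
  rcases eq_or_ne P 0 with rfl | hP
  · rw [logDist_zero_left, hφ0, logDist_zero_left]
  rcases eq_or_ne Q 0 with rfl | hQ
  · rw [logDist_comm, logDist_zero_left, hφ0, logDist_comm, logDist_zero_left]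
  obtain ⟨c, hc, hcP⟩ := v.exists_isNormalized_smul hP
  obtain ⟨e, he, heQ⟩ := v.exists_isNormalized_smul hQ
  have hsource : logDist v P Q = logDist v (c • P) (e • Q) := by
    rw [logDist_smul_left v hc, logDist_smul_right v he]
  have htarget : logDist v (evalPair d a b P) (evalPair d a b Q) =
      logDist v (evalPair d a b (c • P)) (evalPair d a b (e • Q)) := by
    rw [evalPair_smul, evalPair_smul, logDist_smul_left v (pow_ne_zero d hc),
      logDist_smul_right v (pow_ne_zero d he)]
  rw [hsource, htarget, logDist_of_isNormalized v hcP heQ, logDist_of_isNormalized v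
    (v.isNormalized_evalPair hd ha hb hres hcP) (v.isNormalized_evalPair hd ha hb hres heQ)]
  exact v.map_sub_le_map_binForm_cross ha hb hcP.ge heQ.ge

theorem logDist_le_logDist_evalPair_of_goodReduction (hd : 1 ≤ d) (hgood : GoodReduction v d a b)
    (P Q : K × K) : logDist v P Q ≤ logDist v (evalPair d a b P) (evalPair d a b Q) := by
  obtain ⟨u, hu, hint, -, hres⟩ := hgood
  have h := logDist_le_logDist_evalPair v hd (fun i => (hint i).1) (fun i => (hint i).2) hres P Q
  rwa [evalPair_const_mul, evalPair_const_mul, logDist_smul_left v hu,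
    logDist_smul_right v hu] at h

theorem monotone_logDist_iterate (hd : 1 ≤ d) (hgood : GoodReduction v d a b) (P : K × K)
    (i j : ℕ) :
    Monotone fun t => logDist v ((evalPair d a b)^[i + t] P) ((evalPair d a b)^[j + t] P) :=
  monotone_nat_of_le_succ fun t => by
    simp only [← add_assoc, Function.iterate_succ_apply']
    exact logDist_le_logDist_evalPair_of_goodReduction v hd hgood _ _

theorem periodic_logDist_iterate {P : K × K} {n : ℕ} {c : K} (hc : c ≠ 0)
    (hper : (evalPair d a b)^[n] P = c • P) (i j : ℕ) :
    Function.Periodic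
      (fun t => logDist v ((evalPair d a b)^[i + t] P) ((evalPair d a b)^[j + t] P)) n := by
  intro t
  simp only [← add_assoc, Function.iterate_add_apply _ _ n, hper, iterate_evalPair_smul,
    logDist_smul_left v (pow_ne_zero _ hc), logDist_smul_right v (pow_ne_zero _ hc)]

end AddValuation

theorem logDist_iterate_shift_invariant_general {K : Type} [Field K] (v : K → WithTop ℤ)
    (hv0 : v 0 = ⊤) (hvfin : ∀ x : K, x ≠ 0 → v x ≠ ⊤)
    (hvmul : ∀ x y : K, v (x * y) = v x + v y)
    (hvadd : ∀ x y : K, min (v x) (v y) ≤ v (x + y))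
    (d : ℕ) (hd : 1 ≤ d) (a b : Fin (d+1) → K)
    (hgood : GoodReduction v d a b)
    (P : K × K) (n : ℕ) (hn : 0 < n)
    (hper : ∃ c : K, c ≠ 0 ∧ (evalPair d a b)^[n] P = c • P)
    (i j k : ℕ) :
    logDist v ((evalPair d a b)^[i] P) ((evalPair d a b)^[j] P) =
      logDist v ((evalPair d a b)^[i + k] P) ((evalPair d a b)^[j + k] P) := by
  have hv1 : v 1 = 0 :=
    (add_left_inj_of_ne_top (hvfin 1 one_ne_zero)).1 (by rw [← hvmul, one_mul, zero_add])
  let w : AddValuation K (WithTop ℤ) := AddValuation.of v hv0 hv1 hvadd hvmul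
  obtain ⟨c, hc, hcP⟩ := hper
  exact ((w.monotone_logDist_iterate hd hgood P i j).eq_apply_zero_of_periodic
    (w.periodic_logDist_iterate hc hcP i j) hn k).symm

/-- Let `φ` be a morphism of `ℙ¹` defined over `K` with good reduction at the place
`v`, and let `P ∈ ℙ¹(K)` be a periodic point of `φ` with minimal period `n`.  Then
`δ_v(φ^i(P), φ^j(P)) = δ_v(φ^{i+k}(P), φ^{j+k}(P))` for all `i, j, k`. -/
theorem logDist_iterate_shift_invariant {K : Type} [Field K] (v : K → WithTop ℤ)
    (hv0 : v 0 = ⊤) (hvfin : ∀ x : K, x ≠ 0 → v x ≠ ⊤)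
    (hvmul : ∀ x y : K, v (x * y) = v x + v y)
    (hvadd : ∀ x y : K, min (v x) (v y) ≤ v (x + y))
    (hvdisc : ∀ n : ℤ, ∃ x : K, v x = (n : WithTop ℤ))
    (d : ℕ) (hd : 1 ≤ d) (a b : Fin (d+1) → K)
    (hgood : GoodReduction v d a b)
    (P : K × K) (hP : P ≠ (0, 0)) (n : ℕ) (hn : 0 < n)
    (hper : ∃ c : K, c ≠ 0 ∧ (evalPair d a b)^[n] P = c • P)
    (hmin : ∀ m : ℕ, 0 < m →
      (∃ c : K, c ≠ 0 ∧ (evalPair d a b)^[m] P = c • P) → n ≤ m)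
    (i j k : ℕ) :
    logDist v ((evalPair d a b)^[i] P) ((evalPair d a b)^[j] P) =
      logDist v ((evalPair d a b)^[i + k] P) ((evalPair d a b)^[j + k] P) :=
  logDist_iterate_shift_invariant_general v hv0 hvfin hvmul hvadd d hd a b hgood P n hn hper i j k
end
end

section
/- Let φ be an endomorphism of ℙ¹ of degree ≥ 2 defined over a field K with a discrete valuation v at which φ has good reduction, with residue field k(v). Let P ∈ ℙ¹(K) be periodic for φ with minimal period n, let m be the minimal period of the reduction of P modulo v for the reduced map φ_v, and let r be the multiplicative order of (φ^m)'(P) in k(v)*. Then n = m, or n = mr, or n = p^e·m·r for some e ≥ 1, where p is the characteristic of k(v). -/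
set_option synthInstance.maxHeartbeats 1000000

noncomputable section

/-- The Jacobian matrix of the homogeneous map `(F,G)` at the point `P`. -/
def jacMat {k : Type} [CommRing k] (d : ℕ) (a b : Fin (d+1) → k) (P : k × k) :
    Matrix (Fin 2) (Fin 2) k :=
  Matrix.of
    ![![∑ i : Fin (d+1), a i * (i : ℕ) * P.1 ^ ((i:ℕ) - 1) * P.2 ^ (d - (i:ℕ)),
        ∑ i : Fin (d+1), a i * ((d - (i:ℕ) : ℕ)) * P.1 ^ (i:ℕ) * P.2 ^ (d - (i:ℕ) - 1)],
      ![∑ i : Fin (d+1), b i * (i : ℕ) * P.1 ^ ((i:ℕ) - 1) * P.2 ^ (d - (i:ℕ)),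
        ∑ i : Fin (d+1), b i * ((d - (i:ℕ) : ℕ)) * P.1 ^ (i:ℕ) * P.2 ^ (d - (i:ℕ) - 1)]]

/-- The chain-rule product of Jacobian matrices of `(F,G)` along the forward orbit of
`P` : `jacProd m` is the Jacobian matrix of the `m`-th iterate of `(F,G)` at `P`. -/
def jacProd {k : Type} [CommRing k] (d : ℕ) (a b : Fin (d+1) → k) (P : k × k) :
    ℕ → Matrix (Fin 2) (Fin 2) k
  | 0 => 1
  | (j+1) => jacMat d a b ((evalPair d a b)^[j] P) * jacProd d a b P j

/-!
Good reduction keeps normalized lifts of the orbit of `P` normalized, so reduction commutes with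
`φ` along the orbit and the exact period `m` of `P mod v` divides `n`; write `n = κ m`. In an
affine coordinate `z` around `P`, put `z_j = z(φ^{jm} P)`. A first-order Taylor expansion of
`φ^m` along the reduced cycle gives `z_{i+1} - z_{j+1} = (z_i - z_j) w` with `w ≡ λ (mod v)`,
`λ` the multiplier of the reduced cycle. Telescoping `z_κ = z_0` yields
`1 + λ + ⋯ + λ^{κ-1} ≡ 0`, so `λ^κ = 1` and `r ∣ κ`. The subsequence `z_{rj}` has multiplier
`λ^r = 1`, for which the same sum reads `κ/r ≡ 0`; repeating with the subsequence of step `p`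
shows that `κ/r` is a power of `p` (Pezda).
-/

namespace MortonSilvermanZieve

section Det2

variable {S T : Type} [CommRing S] [CommRing T]

def det2 (A B : S × S) : S := A.1 * B.2 - A.2 * B.1

def mulVec2 (M : Matrix (Fin 2) (Fin 2) S) (A : S × S) : S × S :=
  (M 0 0 * A.1 + M 0 1 * A.2, M 1 0 * A.1 + M 1 1 * A.2)

lemma det2_self (A : S × S) : det2 A A = 0 := by
  simp only [det2]; ring

lemma det2_smul_left (c : S) (A B : S × S) : det2 (c • A) B = c * det2 A B := by
  simp only [det2, Prod.smul_fst, Prod.smul_snd, smul_eq_mul]; ring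

lemma det2_smul_right (c : S) (A B : S × S) : det2 A (c • B) = c * det2 A B := by
  simp only [det2, Prod.smul_fst, Prod.smul_snd, smul_eq_mul]; ring

lemma det2_smul_smul_self (c c' : S) (A : S × S) : det2 (c • A) (c' • A) = 0 := by
  rw [det2_smul_left, det2_smul_right, det2_self, mul_zero, mul_zero]

lemma det2_smul_eq_smul_add_smul (A B e : S × S) :
    det2 A e • B = det2 B e • A + det2 A B • e := by
  ext <;> simp only [det2, Prod.smul_fst, Prod.smul_snd, Prod.fst_add, Prod.snd_add,
    smul_eq_mul] <;> ring

lemma det2_mul_det2_sub_det2_mul_det2 (U W X Y : S × S) :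
    det2 U X * det2 Y W - det2 U Y * det2 X W = det2 U W * det2 Y X := by
  simp only [det2]; ring

lemma det2_mulVec2_add_det2_mulVec2 (M : Matrix (Fin 2) (Fin 2) S) (A B : S × S) :
    det2 (mulVec2 M A) B + det2 A (mulVec2 M B) = M.trace * det2 A B := by
  simp only [det2, mulVec2, Matrix.trace_fin_two]; ring

lemma det2_mul_det2_mulVec2 (M : Matrix (Fin 2) (Fin 2) S) (W v x e : S × S) :
    det2 v e * det2 W (mulVec2 M x)
      = det2 v x * det2 W (mulVec2 M e) + det2 x e * det2 W (mulVec2 M v) := by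
  simp only [det2, mulVec2]; ring

lemma mulVec2_one (A : S × S) : mulVec2 1 A = A := by
  simp [mulVec2]

lemma mulVec2_mul (M N : Matrix (Fin 2) (Fin 2) S) (A : S × S) :
    mulVec2 (M * N) A = mulVec2 M (mulVec2 N A) := by
  simp only [mulVec2, Matrix.mul_apply, Fin.sum_univ_two]
  ext <;> ring

lemma mulVec2_smul (M : Matrix (Fin 2) (Fin 2) S) (c : S) (A : S × S) :
    mulVec2 M (c • A) = c • mulVec2 M A := by
  simp only [mulVec2, Prod.smul_fst, Prod.smul_snd, Prod.smul_mk, smul_eq_mul]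
  ext <;> ring

lemma smul_mulVec2 (M : Matrix (Fin 2) (Fin 2) S) (c : S) (A : S × S) :
    mulVec2 (c • M) A = c • mulVec2 M A := by
  simp only [mulVec2, Matrix.smul_apply, Prod.smul_mk, smul_eq_mul]
  ext <;> ring

lemma prodMap_add (σ : S →+* T) (A B : S × S) :
    Prod.map σ σ (A + B) = Prod.map σ σ A + Prod.map σ σ B := by
  ext <;> simp

lemma prodMap_smul (σ : S →+* T) (c : S) (A : S × S) :
    Prod.map σ σ (c • A) = σ c • Prod.map σ σ A := by
  ext <;> simp

lemma map_det2 (σ : S →+* T) (A B : S × S) :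
    σ (det2 A B) = det2 (Prod.map σ σ A) (Prod.map σ σ B) := by
  simp [det2]

lemma map_mulVec2 (σ : S →+* T) (M : Matrix (Fin 2) (Fin 2) S) (A : S × S) :
    Prod.map σ σ (mulVec2 M A) = mulVec2 (M.map σ) (Prod.map σ σ A) := by
  simp [mulVec2]

lemma exists_isUnit_det2 {A : S × S} (hA : IsUnit A.1 ∨ IsUnit A.2) :
    ∃ e : S × S, IsUnit (det2 A e) := by
  rcases hA with h | h
  · exact ⟨(0, 1), by simpa [det2] using h⟩
  · exact ⟨(1, 0), by simpa [det2] using h⟩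

lemma ne_zero_of_isUnit_or_isUnit [Nontrivial S] {X : S × S} (hX : IsUnit X.1 ∨ IsUnit X.2) :
    X ≠ 0 := by
  rintro rfl
  simp at hX

lemma eq_smul_add_smul_of_isUnit_det2 {A e : S × S} (he : IsUnit (det2 A e)) (B : S × S) :
    B = (det2 B e * Ring.inverse (det2 A e)) • A
      + (det2 A B * Ring.inverse (det2 A e)) • e := by
  rw [mul_comm, ← smul_smul, mul_comm, ← smul_smul, ← smul_add,
    ← det2_smul_eq_smul_add_smul, smul_smul, Ring.inverse_mul_cancel _ he, one_smul]

lemma exists_det2_ne_zero {K : Type} [Field K] {X : K × K} (hX : X ≠ 0) :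
    ∃ e : K × K, det2 X e ≠ 0 := by
  have hX' : IsUnit X.1 ∨ IsUnit X.2 := by
    by_contra! h
    exact hX (Prod.ext (by simpa using h.1) (by simpa using h.2))
  obtain ⟨e, he⟩ := exists_isUnit_det2 hX'
  exact ⟨e, he.ne_zero⟩

lemma det2_eq_zero_iff {K : Type} [Field K] {X Y : K × K} (hX : X ≠ 0) (hY : Y ≠ 0) :
    det2 X Y = 0 ↔ ∃ c : K, c ≠ 0 ∧ Y = c • X := by
  refine ⟨fun h => ?_, fun ⟨c, _, hc⟩ => by rw [hc, det2_smul_right, det2_self, mul_zero]⟩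
  obtain ⟨e, he⟩ := exists_det2_ne_zero hX
  have hYX : Y = (det2 Y e / det2 X e) • X := by
    rw [div_eq_inv_mul, mul_smul, ← add_zero (det2 Y e • X), ← zero_smul K e, ← h,
      ← det2_smul_eq_smul_add_smul, inv_smul_smul₀ he]
  refine ⟨_, fun h0 => hY ?_, hYX⟩
  rw [hYX, h0, zero_smul]

/-- An affine coordinate on `ℙ¹` away from `[W]`, vanishing at `P`. -/
def affineCoord (P W X : S × S) : S := det2 P X * Ring.inverse (det2 X W)

lemma affineCoord_self (P W : S × S) : affineCoord P W P = 0 := by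
  rw [affineCoord, det2_self, zero_mul]

lemma affineCoord_eq_zero_iff (P W : S × S) {X : S × S} (hX : IsUnit (det2 X W)) :
    affineCoord P W X = 0 ↔ det2 P X = 0 :=
  hX.ringInverse.mul_left_eq_zero

lemma affineCoord_sub (P W : S × S) {X Y : S × S} (hX : IsUnit (det2 X W))
    (hY : IsUnit (det2 Y W)) :
    affineCoord P W X - affineCoord P W Y
      = det2 P W * det2 Y X * Ring.inverse (det2 X W) * Ring.inverse (det2 Y W) := by
  have h := det2_mul_det2_sub_det2_mul_det2 P W X Y
  have hX' := Ring.mul_inverse_cancel _ hX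
  have hY' := Ring.mul_inverse_cancel _ hY
  unfold affineCoord
  linear_combination (Ring.inverse (det2 X W) * Ring.inverse (det2 Y W)) * h
    - det2 P X * Ring.inverse (det2 X W) * hY' + det2 P Y * Ring.inverse (det2 Y W) * hX'

end Det2

section Homogeneous

variable {S : Type} [CommRing S]

lemma iterate_smul_of_homogeneous {f : S × S → S × S} {d : ℕ}
    (hf : ∀ (c : S) (A : S × S), f (c • A) = c ^ d • f A) (c : S) (A : S × S) (j : ℕ) :
    f^[j] (c • A) = c ^ (d ^ j) • f^[j] A := by
  induction j with
  | zero => simp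
  | succ j ih =>
    rw [Function.iterate_succ_apply', Function.iterate_succ_apply', ih, hf, ← pow_mul,
      ← pow_succ]

end Homogeneous

section Periods

variable {K : Type} [Field K] {f : K × K → K × K} {d : ℕ}

lemma exists_iterate_mul_eq_smul (hf : ∀ (c : K) (A : K × K), f (c • A) = c ^ d • f A)
    {v : K × K} {m : ℕ} {C : K} (hC : C ≠ 0) (hmper : f^[m] v = C • v) (j : ℕ) :
    ∃ g : K, g ≠ 0 ∧ f^[m * j] v = g • v := by
  induction j with
  | zero => exact ⟨1, one_ne_zero, by simp⟩
  | succ j ih =>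
    obtain ⟨g, hg, hgv⟩ := ih
    refine ⟨C ^ (d ^ (m * j)) * g, mul_ne_zero (pow_ne_zero _ hC) hg, ?_⟩
    rw [Nat.mul_succ, Function.iterate_add_apply, hmper, iterate_smul_of_homogeneous hf, hgv,
      smul_smul]

lemma dvd_of_iterate_eq_smul (hf : ∀ (c : K) (A : K × K), f (c • A) = c ^ d • f A)
    {v : K × K} {m n : ℕ} (hm : 0 < m) {C : K} (hC : C ≠ 0) (hmper : f^[m] v = C • v)
    (hmmin : ∀ m' : ℕ, 0 < m' → (∃ C' : K, C' ≠ 0 ∧ f^[m'] v = C' • v) → m ≤ m')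
    {c : K} (hc : c ≠ 0) (hn : f^[n] v = c • v) : m ∣ n := by
  obtain ⟨g, hg, hgv⟩ := exists_iterate_mul_eq_smul hf hC hmper (n / m)
  have hsplit : f^[n] v = g ^ (d ^ (n % m)) • f^[n % m] v := by
    conv_lhs => rw [← Nat.mod_add_div n m, Function.iterate_add_apply, hgv,
      iterate_smul_of_homogeneous hf]
  have hrem : f^[n % m] v = ((g ^ (d ^ (n % m)))⁻¹ * c) • v := by
    rw [mul_smul, ← hn, hsplit, inv_smul_smul₀ (pow_ne_zero _ hg)]
  by_contra hdvd
  have hpos : 0 < n % m := Nat.pos_of_ne_zero fun h => hdvd (Nat.dvd_of_mod_eq_zero h)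
  exact absurd (hmmin _ hpos ⟨_, mul_ne_zero (inv_ne_zero (pow_ne_zero _ hg)) hc, hrem⟩)
    (not_le.2 (Nat.mod_lt n hm))

end Periods

section Forms

variable {S T : Type} [CommRing S] [CommRing T] (d : ℕ) (a b : Fin (d+1) → S)

lemma evalPair_smul (c : S) (A : S × S) :
    evalPair d a b (c • A) = c ^ d • evalPair d a b A := by
  have key : ∀ (q : S) (i : Fin (d+1)), q * (c * A.1) ^ (i:ℕ) * (c * A.2) ^ (d - i)
      = c ^ d * (q * A.1 ^ (i:ℕ) * A.2 ^ (d - i)) := fun q i => by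
    rw [mul_pow, mul_pow, ← pow_mul_pow_sub c (Nat.lt_succ_iff.mp i.isLt)]
    ring
  ext <;> simp only [evalPair, Prod.smul_fst, Prod.smul_snd, Prod.smul_mk, smul_eq_mul,
    Finset.mul_sum] <;> exact Finset.sum_congr rfl fun i _ => key _ i

lemma evalPair_iterate_smul (c : S) (A : S × S) (j : ℕ) :
    (evalPair d a b)^[j] (c • A) = c ^ (d ^ j) • (evalPair d a b)^[j] A :=
  iterate_smul_of_homogeneous (evalPair_smul d a b) c A j

lemma map_evalPair (σ : S →+* T) (A : S × S) :
    Prod.map σ σ (evalPair d a b A)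
      = evalPair d (fun i => σ (a i)) (fun i => σ (b i)) (Prod.map σ σ A) := by
  simp [evalPair]

lemma map_evalPair_iterate (σ : S →+* T) (A : S × S) (j : ℕ) :
    Prod.map σ σ ((evalPair d a b)^[j] A)
      = (evalPair d (fun i => σ (a i)) (fun i => σ (b i)))^[j] (Prod.map σ σ A) := by
  induction j with
  | zero => rfl
  | succ j ih => rw [Function.iterate_succ_apply', Function.iterate_succ_apply', ← ih,
      map_evalPair]

lemma natCast_mul_pow_sub_one_mul (i : ℕ) (x : S) : (i : S) * x ^ (i - 1) * x = i * x ^ i := by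
  cases i with
  | zero => simp
  | succ i => rw [Nat.add_sub_cancel, mul_assoc, ← pow_succ]

lemma mulVec2_jacMat_self (A : S × S) :
    mulVec2 (jacMat d a b A) A = (d : S) • evalPair d a b A := by
  have key : ∀ (q : S) (i : Fin (d+1)),
      q * (i : ℕ) * A.1 ^ ((i : ℕ) - 1) * A.2 ^ (d - i) * A.1
        + q * ((d - i : ℕ) : S) * A.1 ^ (i : ℕ) * A.2 ^ (d - i - 1) * A.2
        = d * (q * A.1 ^ (i : ℕ) * A.2 ^ (d - i)) := fun q i => by
    have h1 := natCast_mul_pow_sub_one_mul (i : ℕ) A.1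
    have h2 := natCast_mul_pow_sub_one_mul (d - i) A.2
    rw [Nat.cast_sub (Nat.lt_succ_iff.mp i.isLt)] at h2 ⊢
    linear_combination q * A.2 ^ (d - i) * h1 + q * A.1 ^ (i : ℕ) * h2
  ext <;> simp only [mulVec2, jacMat, evalPair, Matrix.of_apply, Matrix.cons_val_zero,
    Matrix.cons_val_one, Prod.smul_fst, Prod.smul_snd, smul_eq_mul,
    Finset.sum_mul, Finset.mul_sum, ← Finset.sum_add_distrib] <;>
    exact Finset.sum_congr rfl fun i _ => key _ i

lemma jacMat_term_smul {n e f : ℕ} (h : n = 0 ∨ e + f = d - 1) (q c x y : S) :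
    q * (n : S) * (c * x) ^ e * (c * y) ^ f = c ^ (d - 1) * (q * n * x ^ e * y ^ f) := by
  rcases h with rfl | h
  · simp
  · rw [mul_pow, mul_pow, ← h, pow_add]; ring

lemma jacMat_smul (c : S) (A : S × S) :
    jacMat d a b (c • A) = c ^ (d - 1) • jacMat d a b A := by
  ext i j
  fin_cases i <;> fin_cases j <;>
    simp only [jacMat, Matrix.of_apply, Matrix.smul_apply, Prod.smul_fst, Prod.smul_snd,
      smul_eq_mul, Finset.mul_sum, Fin.zero_eta, Fin.mk_one, Matrix.cons_val_zero,
      Matrix.cons_val_one] <;>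
    exact Finset.sum_congr rfl fun i _ => jacMat_term_smul d (by have := i.isLt; omega) _ _ _ _

lemma map_jacMat (σ : S →+* T) (A : S × S) :
    (jacMat d a b A).map σ
      = jacMat d (fun i => σ (a i)) (fun i => σ (b i)) (Prod.map σ σ A) := by
  ext i j
  fin_cases i <;> fin_cases j <;> simp [jacMat]

open Polynomial in
lemma exists_add_mul_pow (x y t : S) (i : ℕ) :
    ∃ k, (x + t * y) ^ i = x ^ i + t * ((i : S) * x ^ (i - 1) * y) + t ^ 2 * k := by
  obtain ⟨k, hk⟩ := (X ^ i : S[X]).binomExpansion x (t * y)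
  refine ⟨k * y ^ 2, ?_⟩
  simp only [eval_pow, eval_X, derivative_X_pow, eval_mul, eval_C] at hk
  linear_combination hk

lemma exists_add_mul_pow_mul_add_mul_pow (x x' y y' t : S) (i j : ℕ) :
    ∃ k, (x + t * y) ^ i * (x' + t * y') ^ j = x ^ i * x' ^ j
      + t * ((i : S) * x ^ (i - 1) * x' ^ j * y + (j : S) * x ^ i * x' ^ (j - 1) * y')
      + t ^ 2 * k := by
  obtain ⟨k, hk⟩ := exists_add_mul_pow x y t i
  obtain ⟨k', hk'⟩ := exists_add_mul_pow x' y' t j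
  refine ⟨k * (x' + t * y') ^ j + x ^ i * k'
    + (i : S) * x ^ (i - 1) * y * ((j : S) * x' ^ (j - 1) * y' + t * k'), ?_⟩
  rw [hk, hk']
  ring

lemma exists_form_add_smul (c : Fin (d+1) → S) (A Y : S × S) (t : S) :
    ∃ k, ∑ i : Fin (d+1), c i * (A.1 + t * Y.1) ^ (i:ℕ) * (A.2 + t * Y.2) ^ (d - i)
      = ∑ i : Fin (d+1), c i * A.1 ^ (i:ℕ) * A.2 ^ (d - i)
        + t * ((∑ i : Fin (d+1), c i * (i : ℕ) * A.1 ^ ((i:ℕ) - 1) * A.2 ^ (d - i)) * Y.1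
          + (∑ i : Fin (d+1), c i * ((d - i : ℕ) : S) * A.1 ^ (i:ℕ) * A.2 ^ (d - i - 1))
            * Y.2)
        + t ^ 2 * k := by
  choose k hk using fun i : Fin (d+1) =>
    exists_add_mul_pow_mul_add_mul_pow A.1 A.2 Y.1 Y.2 t i (d - i)
  refine ⟨∑ i, c i * k i, ?_⟩
  simp only [Finset.sum_mul, Finset.mul_sum, ← Finset.sum_add_distrib]
  refine Finset.sum_congr rfl fun i _ => ?_
  rw [mul_assoc (c i), hk i]
  ring

lemma exists_evalPair_add_smul (A Y : S × S) (t : S) :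
    ∃ K : S × S, evalPair d a b (A + t • Y)
      = evalPair d a b A + t • mulVec2 (jacMat d a b A) Y + t ^ 2 • K := by
  obtain ⟨k, hk⟩ := exists_form_add_smul d a A Y t
  obtain ⟨k', hk'⟩ := exists_form_add_smul d b A Y t
  refine ⟨(k, k'), Prod.ext ?_ ?_⟩
  · simpa [evalPair, mulVec2, jacMat] using hk
  · simpa [evalPair, mulVec2, jacMat] using hk'

lemma mulVec2_jacProd_self (A : S × S) (m : ℕ) :
    mulVec2 (jacProd d a b A m) A = (d : S) ^ m • (evalPair d a b)^[m] A := by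
  induction m with
  | zero => simp [jacProd, mulVec2_one]
  | succ j ih =>
    rw [jacProd, mulVec2_mul, ih, mulVec2_smul, mulVec2_jacMat_self,
      Function.iterate_succ_apply', smul_smul, pow_succ]

lemma exists_det2_evalPair_smul_add_smul (A e : S × S) (s t : S) :
    ∃ K : S × S, det2 (evalPair d a b A) (evalPair d a b (s • A + t • e))
      = t * det2 (evalPair d a b A) (mulVec2 (jacMat d a b (s • A)) e + t • K) := by
  obtain ⟨K, hK⟩ := exists_evalPair_add_smul d a b (s • A) e t
  refine ⟨K, ?_⟩
  rw [hK, evalPair_smul]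
  simp only [det2, Prod.fst_add, Prod.snd_add, Prod.smul_fst, Prod.smul_snd, smul_eq_mul]
  ring

end Forms

section Multiplier

variable {k : Type} [Field k] (d : ℕ) (a b : Fin (d+1) → k)

/-- By Euler's identity the linear form `x ↦ det2 (φ v) (J_v x)` vanishes at `v`, so it is
`ρ(v) • det2 v`; `ρ(v)` is read off at a vector `e` with `det2 v e ≠ 0`. -/
def localMultiplier (v : k × k) : k :=
  open Classical in
  let e : k × k := if v.1 = 0 then (1, 0) else (0, 1)
  det2 (evalPair d a b v) (mulVec2 (jacMat d a b v) e) / det2 v e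

lemma det2_evalPair_mulVec2_jacMat_of_det2_ne_zero {v e : k × k} (he : det2 v e ≠ 0)
    (x : k × k) :
    det2 (evalPair d a b v) (mulVec2 (jacMat d a b v) x)
      = det2 (evalPair d a b v) (mulVec2 (jacMat d a b v) e) / det2 v e * det2 v x := by
  have h := det2_mul_det2_mulVec2 (jacMat d a b v) (evalPair d a b v) v x e
  rw [mulVec2_jacMat_self, det2_smul_right, det2_self, mul_zero, mul_zero, add_zero] at h
  field_simp
  linear_combination h

lemma det2_evalPair_mulVec2_jacMat {v : k × k} (hv : v ≠ 0) (x : k × k) :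
    det2 (evalPair d a b v) (mulVec2 (jacMat d a b v) x)
      = localMultiplier d a b v * det2 v x := by
  unfold localMultiplier
  split_ifs with h
  · refine det2_evalPair_mulVec2_jacMat_of_det2_ne_zero d a b ?_ x
    have : v.2 ≠ 0 := fun h2 => hv (Prod.ext h h2)
    simpa [det2]
  · exact det2_evalPair_mulVec2_jacMat_of_det2_ne_zero d a b (by simpa [det2]) x

lemma det2_iterate_mulVec2_jacProd {v : k × k} {m : ℕ}
    (hvi : ∀ i < m, (evalPair d a b)^[i] v ≠ 0) (x : k × k) :
    det2 ((evalPair d a b)^[m] v) (mulVec2 (jacProd d a b v m) x)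
      = (∏ i ∈ Finset.range m, localMultiplier d a b ((evalPair d a b)^[i] v)) * det2 v x := by
  induction m with
  | zero => simp [jacProd, mulVec2_one]
  | succ j ih =>
    rw [jacProd, mulVec2_mul, Function.iterate_succ_apply',
      det2_evalPair_mulVec2_jacMat d a b (hvi j j.lt_succ_self),
      ih (fun i hi => hvi i (hi.trans j.lt_succ_self)), Finset.prod_range_succ]
    ring

lemma prod_localMultiplier_eq {v : k × k} (hv : v ≠ 0) {m : ℕ}
    (hvi : ∀ i < m, (evalPair d a b)^[i] v ≠ 0) {C : k}
    (hC : (evalPair d a b)^[m] v = C • v) :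
    ∏ i ∈ Finset.range m, localMultiplier d a b ((evalPair d a b)^[i] v)
      = C * ((jacProd d a b v m).trace - (d : k) ^ m * C) := by
  obtain ⟨x, hx⟩ := exists_det2_ne_zero hv
  have hpol := det2_mulVec2_add_det2_mulVec2 (jacProd d a b v m) v x
  have hchain := det2_iterate_mulVec2_jacProd d a b hvi x
  rw [mulVec2_jacProd_self, hC, smul_smul, det2_smul_left] at hpol
  rw [hC, det2_smul_left] at hchain
  refine mul_right_cancel₀ hx ?_
  linear_combination -hchain + C * hpol

end Multiplier

section Resultant

open Matrix

variable {S : Type} [CommRing S] (d : ℕ) (a b : Fin (d+1) → S)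

def monomialVec (P : S × S) : Fin (d+d) → S := fun j => P.2 ^ (d + d - 1 - j) * P.1 ^ (j : ℕ)

lemma sum_band_mul_monomialVec (c : Fin (d+1) → S) {o : ℕ} (ho : o < d) (g : Fin (d+d) → S)
    (hg : ∀ j : Fin (d+d),
      g j = if h : o ≤ j ∧ (j : ℕ) ≤ o + d then c ⟨j - o, by omega⟩ else 0)
    (P : S × S) :
    ∑ j, g j * monomialVec d P j
      = P.2 ^ (d - 1 - o) * P.1 ^ o * ∑ i : Fin (d+1), c i * P.1 ^ (i : ℕ) * P.2 ^ (d - i) := by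
  rw [Finset.mul_sum]
  symm
  refine Finset.sum_of_injOn (fun i : Fin (d+1) => (⟨o + i, by omega⟩ : Fin (d+d)))
    (fun i _ j _ h => by simpa [Fin.ext_iff] using h) (fun _ _ => Finset.mem_coe.2 (by simp))
    (fun j _ hj => ?_) (fun i _ => ?_)
  · rw [hg, dif_neg, zero_mul]
    rintro ⟨h1, h2⟩
    exact hj ⟨⟨j - o, by omega⟩, by simp, Fin.ext (by simp; omega)⟩
  · have hi := i.isLt
    rw [hg, dif_pos (by simp; omega), monomialVec]
    have h1 : P.2 ^ (d + d - 1 - (o + i)) = P.2 ^ (d - 1 - o) * P.2 ^ (d - i) := by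
      rw [← pow_add]; congr 1; omega
    simp only [Nat.add_sub_cancel_left, Fin.eta, h1, pow_add]
    ring

lemma sylvester_mulVec_monomialVec_mem (P : S × S) (i : Fin (d+d)) :
    (sylvester d a b *ᵥ monomialVec d P) i
      ∈ Ideal.span {(evalPair d a b P).1, (evalPair d a b P).2} := by
  rw [Matrix.mulVec, dotProduct]
  by_cases hi : (i : ℕ) < d
  · rw [sum_band_mul_monomialVec d a hi _ (fun j => by simp [sylvester, hi])]
    exact Ideal.mul_mem_left _ _ (Ideal.subset_span (by simp [evalPair]))
  · have hi' : (i : ℕ) - d < d := by omega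
    rw [sum_band_mul_monomialVec d b hi' _ (fun j => by
      simp only [sylvester, hi, dite_false]
      exact dite_congr (by apply propext; omega) (fun _ => rfl) (fun _ => rfl))]
    exact Ideal.mul_mem_left _ _ (Ideal.subset_span (by simp [evalPair]))

lemma resultant_mul_monomialVec_mem (P : S × S) (j : Fin (d+d)) :
    resultant d a b * monomialVec d P j
      ∈ Ideal.span {(evalPair d a b P).1, (evalPair d a b P).2} := by
  have h : resultant d a b • monomialVec d P
      = (sylvester d a b).adjugate *ᵥ (sylvester d a b *ᵥ monomialVec d P) := by
    rw [Matrix.mulVec_mulVec, Matrix.adjugate_mul, Matrix.smul_mulVec, Matrix.one_mulVec]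
    rfl
  rw [← smul_eq_mul, ← Pi.smul_apply, h, Matrix.mulVec, dotProduct]
  exact Ideal.sum_mem _ fun i _ =>
    Ideal.mul_mem_left _ _ (sylvester_mulVec_monomialVec_mem d a b P i)

end Resultant

section Pezda

open IsLocalRing

variable {R : Type} [CommRing R] [IsLocalRing R] {z : ℕ → R} {lam : ResidueField R}

def HasMultiplier (z : ℕ → R) (lam : ResidueField R) : Prop :=
  ∀ i j, ∃ w : R, z (i + 1) - z (j + 1) = (z i - z j) * w ∧ residue R w = lam

def IsFirstReturn {α : Type} (z : ℕ → α) (κ : ℕ) : Prop :=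
  0 < κ ∧ z κ = z 0 ∧ ∀ j, 0 < j → j < κ → z j ≠ z 0

lemma HasMultiplier.exists_sub_add (h : HasMultiplier z lam) (s i j : ℕ) :
    ∃ w : R, z (i + s) - z (j + s) = (z i - z j) * w ∧ residue R w = lam ^ s := by
  induction s with
  | zero => exact ⟨1, by simp, by simp⟩
  | succ s ih =>
    obtain ⟨w, hw, hwr⟩ := ih
    obtain ⟨w', hw', hw'r⟩ := h (i + s) (j + s)
    refine ⟨w * w', ?_, by rw [map_mul, hwr, hw'r, pow_succ]⟩
    rw [← add_assoc, ← add_assoc, hw', hw, mul_assoc]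

lemma HasMultiplier.comp_mul (h : HasMultiplier z lam) (r : ℕ) :
    HasMultiplier (fun j => z (r * j)) (lam ^ r) := fun i j => by
  simpa only [Nat.mul_succ] using h.exists_sub_add r (r * i) (r * j)

lemma IsFirstReturn.comp_mul {α : Type} {z : ℕ → α} {r κ : ℕ} (hr : 0 < r)
    (h : IsFirstReturn z (r * κ)) : IsFirstReturn (fun j => z (r * j)) κ := by
  obtain ⟨hpos, hret, hfirst⟩ := h
  refine ⟨Nat.pos_of_mul_pos_left hpos, by simpa using hret, fun j hj hjκ => ?_⟩
  simpa using hfirst (r * j) (Nat.mul_pos hr hj) (Nat.mul_lt_mul_of_pos_left hjκ hr)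

lemma HasMultiplier.geom_sum_eq_zero [IsDomain R] (h : HasMultiplier z lam) {κ : ℕ}
    (hκ : z κ = z 0) (h1 : z 1 ≠ z 0) : ∑ j ∈ Finset.range κ, lam ^ j = 0 := by
  choose w hw hwr using fun j => h (j + 1) j
  have hstep : ∀ j, z (j + 1) - z j = (z 1 - z 0) * ∏ i ∈ Finset.range j, w i := by
    intro j
    induction j with
    | zero => simp
    | succ j ih => rw [hw j, ih, Finset.prod_range_succ, mul_assoc]
  have htel : (z 1 - z 0) * ∑ j ∈ Finset.range κ, ∏ i ∈ Finset.range j, w i = 0 := by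
    rw [Finset.mul_sum, ← Finset.sum_congr rfl fun j _ => hstep j, Finset.sum_range_sub, hκ,
      sub_self]
  have hsum := congrArg (residue R) ((mul_eq_zero.1 htel).resolve_left (sub_ne_zero.2 h1))
  simpa [map_sum, map_prod, hwr] using hsum

lemma HasMultiplier.eq_ringChar_pow [IsDomain R] (h : HasMultiplier z 1) {κ : ℕ}
    (hκ : IsFirstReturn z κ) : ∃ e, κ = ringChar (ResidueField R) ^ e := by
  induction κ using Nat.strong_induction_on generalizing z with
  | _ κ ih =>
    obtain ⟨hpos, hret, hfirst⟩ := hκ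
    rcases Nat.lt_or_ge κ 2 with hκ1 | hκ2
    · exact ⟨0, by rw [pow_zero]; omega⟩
    have hsum := h.geom_sum_eq_zero hret (hfirst 1 one_pos hκ2)
    simp only [one_pow, Finset.sum_const, Finset.card_range, nsmul_eq_mul, mul_one] at hsum
    obtain ⟨κ', rfl⟩ := (ringChar.spec _ κ).1 hsum
    have hp : 1 < ringChar (ResidueField R) :=
      lt_of_le_of_ne (Nat.pos_of_mul_pos_right hpos) CharP.ringChar_ne_one.symm
    obtain ⟨e, he⟩ := ih κ' (lt_mul_left (Nat.pos_of_mul_pos_left hpos) hp)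
      (by simpa using h.comp_mul (ringChar (ResidueField R)))
      (IsFirstReturn.comp_mul (by omega) ⟨hpos, hret, hfirst⟩)
    exact ⟨e + 1, by rw [he, pow_succ']⟩

/-- Pezda's lemma. -/
lemma HasMultiplier.eq_one_or [IsDomain R] (h : HasMultiplier z lam) {κ : ℕ}
    (hκ : IsFirstReturn z κ) :
    κ = 1 ∨ 0 < orderOf lam ∧ ∃ e, κ = ringChar (ResidueField R) ^ e * orderOf lam := by
  obtain ⟨hpos, hret, hfirst⟩ := hκ
  rcases Nat.lt_or_ge κ 2 with hκ1 | hκ2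
  · exact Or.inl (by omega)
  have hsum := h.geom_sum_eq_zero hret (hfirst 1 one_pos hκ2)
  have hpow : lam ^ κ = 1 := by
    rw [← sub_eq_zero, ← geom_sum_mul, hsum, zero_mul]
  have hr : 0 < orderOf lam :=
    orderOf_pos_iff.2 (isOfFinOrder_iff_pow_eq_one.2 ⟨κ, hpos, hpow⟩)
  obtain ⟨κ', rfl⟩ := orderOf_dvd_of_pow_eq_one hpow
  obtain ⟨e, he⟩ := (pow_orderOf_eq_one lam ▸ h.comp_mul (orderOf lam)).eq_ringChar_pow
    (IsFirstReturn.comp_mul hr ⟨hpos, hret, hfirst⟩)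
  exact Or.inr ⟨hr, e, by rw [he, mul_comm]⟩

end Pezda

section Reduction

open IsLocalRing

variable {R : Type} [CommRing R] [IsLocalRing R] (d : ℕ) (a b : Fin (d+1) → R)

local notation "φ" => evalPair d a b
local notation "φ̄" => evalPair d (fun i => residue R (a i)) (fun i => residue R (b i))
local notation "red" => Prod.map (residue R) (residue R)
local notation "ρ̄" => localMultiplier d (fun i => residue R (a i)) (fun i => residue R (b i))

lemma map_residue_ne_zero_iff (X : R × R) :
    red X ≠ 0 ↔ IsUnit X.1 ∨ IsUnit X.2 := by
  simp only [ne_eq, Prod.ext_iff, Prod.map_fst, Prod.map_snd, Prod.fst_zero, Prod.snd_zero,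
    not_and_or, residue_ne_zero_iff_isUnit]

lemma isUnit_or_isUnit_evalPair (hd : 1 ≤ d) (hgood : IsUnit (resultant d a b)) {P : R × R}
    (hP : IsUnit P.1 ∨ IsUnit P.2) :
    IsUnit (φ P).1 ∨ IsUnit (φ P).2 := by
  by_contra! h
  have hspan : Ideal.span {(φ P).1, (φ P).2} ≤ maximalIdeal R := by
    simp [Ideal.span_le, Set.insert_subset_iff, h.1, h.2]
  have hmem : ∀ j, monomialVec d P j ∈ maximalIdeal R := fun j =>
    ((maximalIdeal R).unit_mul_mem_iff_mem hgood).1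
      (hspan (resultant_mul_monomialVec_mem d a b P j))
  have hprime := (maximalIdeal.isMaximal R).isPrime
  have h2 := hprime.mem_of_pow_mem _ (by simpa [monomialVec] using hmem ⟨0, by omega⟩)
  have h1 := hprime.mem_of_pow_mem _ (by simpa [monomialVec] using hmem ⟨d + d - 1, by omega⟩)
  rcases hP with hu | hu
  · exact (mem_maximalIdeal _).1 h1 hu
  · exact (mem_maximalIdeal _).1 h2 hu

lemma isUnit_or_isUnit_evalPair_iterate (hd : 1 ≤ d) (hgood : IsUnit (resultant d a b))
    {P : R × R} (hP : IsUnit P.1 ∨ IsUnit P.2) (j : ℕ) :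
    IsUnit (φ^[j] P).1 ∨ IsUnit (φ^[j] P).2 := by
  induction j with
  | zero => exact hP
  | succ j ih =>
    rw [Function.iterate_succ_apply']
    exact isUnit_or_isUnit_evalPair d a b hd hgood ih

lemma residue_ringInverse (x : R) : residue R (Ring.inverse x) = (residue R x)⁻¹ := by
  by_cases hx : IsUnit x
  · exact eq_inv_of_mul_eq_one_left (by rw [← map_mul, Ring.inverse_mul_cancel _ hx, map_one])
  · rw [Ring.inverse_non_unit _ hx, map_zero, (residue_eq_zero_iff x).2 hx, inv_zero]

lemma exists_det2_evalPair_eq_mul (hd : 1 ≤ d) {A B : R × R}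
    {v : ResidueField R × ResidueField R} (hv : v ≠ 0) {α β : ResidueField R} (hα : α ≠ 0)
    (hA : red A = α • v) (hB : red B = β • v) :
    ∃ E : R, det2 (φ A) (φ B) = det2 A B * E ∧
      residue R E * (α * β) = (α * β) ^ d * ρ̄ v := by
  obtain ⟨e, he⟩ := exists_isUnit_det2 ((map_residue_ne_zero_iff A).1
    (by rw [hA]; exact smul_ne_zero hα hv))
  have hres : ∀ X, residue R (det2 X e) = det2 (red X) (red e) := fun X => map_det2 _ X e
  have hδ : det2 v (red e) ≠ 0 := by
    have := (residue_ne_zero_iff_isUnit _).2 he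
    rwa [hres, hA, det2_smul_left, mul_ne_zero_iff, and_iff_right hα] at this
  set u := Ring.inverse (det2 A e)
  set s := det2 B e * u
  set t := det2 A B * u with ht
  -- `B = s • A + t • e` with `t ≡ 0`, and `φ B = s ^ d • φ A + t • (J_{s A} e + t • K)`.
  obtain ⟨K, hK⟩ := exists_det2_evalPair_smul_add_smul d a b A e s t
  refine ⟨det2 (φ A) (mulVec2 (jacMat d a b (s • A)) e + t • K) * u, ?_, ?_⟩
  · rw [← eq_smul_add_smul_of_isUnit_det2 he B] at hK
    rw [hK, ht]
    ring
  have hu : residue R u = (α * det2 v (red e))⁻¹ := by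
    rw [residue_ringInverse, hres, hA, det2_smul_left]
  have ht0 : residue R t = 0 := by
    rw [ht, map_mul, map_det2, hA, hB, det2_smul_smul_self, zero_mul]
  have hsA : red (s • A) = β • v := by
    have hs : residue R s * α = β := by
      rw [map_mul, hres, hB, det2_smul_left, hu]
      field_simp
    rw [prodMap_smul, hA, smul_smul, hs]
  have hρ := det2_evalPair_mulVec2_jacMat d (fun i => residue R (a i)) (fun i => residue R (b i))
    hv (red e)
  rw [map_mul, map_det2, prodMap_add, prodMap_smul, ht0, zero_smul, add_zero, map_mulVec2,
    map_jacMat, hsA, jacMat_smul, smul_mulVec2, map_evalPair, hA, evalPair_smul, det2_smul_left,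
    det2_smul_right, hρ, hu]
  have hd0 : d ≠ 0 := by omega
  rw [mul_pow, ← pow_sub_one_mul hd0 α, ← pow_sub_one_mul hd0 β]
  field_simp


lemma exists_det2_evalPair_iterate_eq_mul (hd : 1 ≤ d) {A B : R × R}
    {v : ResidueField R × ResidueField R} {α β : ResidueField R} (hα : α ≠ 0)
    (hβ : β ≠ 0) (hA : red A = α • v) (hB : red B = β • v) (M : ℕ)
    (hvi : ∀ i < M, φ̄^[i] v ≠ 0) :
    ∃ E : R, det2 (φ^[M] A) (φ^[M] B) = det2 A B * E ∧
      residue R E * (α * β)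
        = (α * β) ^ (d ^ M) * ∏ i ∈ Finset.range M, ρ̄ (φ̄^[i] v) := by
  induction M with
  | zero => exact ⟨1, by simp, by simp⟩
  | succ M ih =>
    obtain ⟨E, hE, hEres⟩ := ih fun i hi => hvi i (hi.trans M.lt_succ_self)
    have hiter : ∀ {X : R × R} {γ : ResidueField R},
        red X = γ • v → red (φ^[M] X) = γ ^ (d ^ M) • φ̄^[M] v := fun hX => by
      rw [map_evalPair_iterate, hX, evalPair_iterate_smul]
    obtain ⟨E', hE', hE'res⟩ := exists_det2_evalPair_eq_mul d a b hd (hvi M M.lt_succ_self)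
      (pow_ne_zero _ hα) (hiter hA) (hiter hB)
    refine ⟨E * E', ?_, ?_⟩
    · rw [Function.iterate_succ_apply', Function.iterate_succ_apply', hE', hE, mul_assoc]
    · have hαβ : (α * β) ^ (d ^ M) ≠ 0 := pow_ne_zero _ (mul_ne_zero hα hβ)
      refine mul_left_cancel₀ hαβ ?_
      rw [← mul_pow] at hE'res
      rw [Finset.prod_range_succ, pow_succ, pow_mul, map_mul]
      linear_combination (residue R E') * (α * β) ^ d ^ M * hEres
        + (α * β) ^ d ^ M * (∏ i ∈ Finset.range M, ρ̄ (φ̄^[i] v)) * hE'res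

lemma exists_affineCoord_iterate_sub_eq_mul (hd : 1 ≤ d) {P W A B : R × R}
    {v : ResidueField R × ResidueField R} (hW : det2 v (red W) ≠ 0) {α β : ResidueField R}
    (hα : α ≠ 0) (hβ : β ≠ 0) (hA : red A = α • v) (hB : red B = β • v) {m : ℕ}
    (hvi : ∀ i < m, φ̄^[i] v ≠ 0) {C : ResidueField R} (hC : C ≠ 0)
    (hcyc : φ̄^[m] v = C • v) {lam : ResidueField R}
    (hlam : lam = (jacProd d (fun i => residue R (a i)) (fun i => residue R (b i)) v m).trace / C
      - ((d ^ m : ℕ) : ResidueField R)) :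
    ∃ w : R, affineCoord P W (φ^[m] A) - affineCoord P W (φ^[m] B)
      = (affineCoord P W A - affineCoord P W B) * w ∧ residue R w = lam := by
  have hv : v ≠ 0 := by rintro rfl; simp [det2] at hW
  have hres : ∀ {X : R × R} {γ : ResidueField R},
      red X = γ • v → residue R (det2 X W) = γ * det2 v (red W) :=
    fun hX => by rw [map_det2, hX, det2_smul_left]
  have hunit : ∀ {X : R × R} {γ : ResidueField R},
      γ ≠ 0 → red X = γ • v → IsUnit (det2 X W) :=
    fun hγ hX => (residue_ne_zero_iff_isUnit _).1 (by rw [hres hX]; exact mul_ne_zero hγ hW)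
  have hiter : ∀ {X : R × R} {γ : ResidueField R},
      red X = γ • v → red (φ^[m] X) = (γ ^ (d ^ m) * C) • v := fun hX => by
    rw [map_evalPair_iterate, hX, evalPair_iterate_smul, hcyc, smul_smul]
  have hαm : α ^ (d ^ m) * C ≠ 0 := mul_ne_zero (pow_ne_zero _ hα) hC
  have hβm : β ^ (d ^ m) * C ≠ 0 := mul_ne_zero (pow_ne_zero _ hβ) hC
  obtain ⟨E, hE, hEres⟩ := exists_det2_evalPair_iterate_eq_mul d a b hd hβ hα hB hA m hvi
  rw [prod_localMultiplier_eq _ _ _ hv hvi hcyc] at hEres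
  refine ⟨det2 A W * det2 B W * E * Ring.inverse (det2 (φ^[m] A) W)
    * Ring.inverse (det2 (φ^[m] B) W), ?_, ?_⟩
  · rw [affineCoord_sub P W (hunit hαm (hiter hA)) (hunit hβm (hiter hB)),
      affineCoord_sub P W (hunit hα hA) (hunit hβ hB), hE]
    have hA' := Ring.mul_inverse_cancel _ (hunit hα hA)
    have hB' := Ring.mul_inverse_cancel _ (hunit hβ hB)
    linear_combination (det2 P W * det2 B A * E * Ring.inverse (det2 (φ^[m] A) W)
      * Ring.inverse (det2 (φ^[m] B) W)) * (-hA' - det2 A W * Ring.inverse (det2 A W) * hB')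
  · simp only [map_mul, residue_ringInverse, hres hA, hres hB, hres (hiter hA), hres (hiter hB)]
    rw [hlam, Nat.cast_pow]
    field_simp
    linear_combination hEres

lemma reduced_iterate_ne_zero (hd : 1 ≤ d) (hgood : IsUnit (resultant d a b)) {P : R × R}
    (hP : IsUnit P.1 ∨ IsUnit P.2) (j : ℕ) : φ̄^[j] (red P) ≠ 0 := by
  rw [← map_evalPair_iterate]
  exact (map_residue_ne_zero_iff _).2 (isUnit_or_isUnit_evalPair_iterate d a b hd hgood hP j)

lemma exists_residue_iterate_mul_eq_smul {P : R × R} {m : ℕ} {C : ResidueField R}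
    (hC : C ≠ 0) (hmper : φ̄^[m] (red P) = C • red P) (j : ℕ) :
    ∃ α : ResidueField R, α ≠ 0 ∧ red (φ^[m * j] P) = α • red P := by
  rw [map_evalPair_iterate]
  exact exists_iterate_mul_eq_smul (evalPair_smul d _ _) hC hmper j

lemma isUnit_det2_iterate_mul {P W : R × R} (hW : IsUnit (det2 P W)) {m : ℕ}
    {C : ResidueField R} (hC : C ≠ 0) (hmper : φ̄^[m] (red P) = C • red P) (j : ℕ) :
    IsUnit (det2 (φ^[m * j] P) W) := by
  obtain ⟨α, hα, hαv⟩ := exists_residue_iterate_mul_eq_smul d a b hC hmper j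
  rw [← residue_ne_zero_iff_isUnit, map_det2, hαv, det2_smul_left, ← map_det2]
  exact mul_ne_zero hα ((residue_ne_zero_iff_isUnit _).2 hW)

lemma dvd_of_det2_iterate_eq_zero (hd : 1 ≤ d) (hgood : IsUnit (resultant d a b))
    {P : R × R} (hP : IsUnit P.1 ∨ IsUnit P.2) {m n : ℕ} (hm : 0 < m) {C : ResidueField R}
    (hC : C ≠ 0) (hmper : φ̄^[m] (red P) = C • red P)
    (hmmin : ∀ m' : ℕ, 0 < m' →
      (∃ C' : ResidueField R, C' ≠ 0 ∧ φ̄^[m'] (red P) = C' • red P) → m ≤ m')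
    (hn : det2 P (φ^[n] P) = 0) : m ∣ n := by
  have hvi := reduced_iterate_ne_zero d a b hd hgood hP
  obtain ⟨c, hc, hcn⟩ := (det2_eq_zero_iff (hvi 0) (hvi n)).1
    (by rw [Function.iterate_zero_apply, ← map_evalPair_iterate, ← map_det2, hn, map_zero])
  exact dvd_of_iterate_eq_smul (evalPair_smul d _ _) hm hC hmper hmmin hc hcn

lemma hasMultiplier_affineCoord_iterate (hd : 1 ≤ d) (hgood : IsUnit (resultant d a b))
    {P W : R × R} (hP : IsUnit P.1 ∨ IsUnit P.2) (hW : IsUnit (det2 P W)) {m : ℕ}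
    {C : ResidueField R} (hC : C ≠ 0) (hmper : φ̄^[m] (red P) = C • red P)
    {lam : ResidueField R}
    (hlam : lam = (jacProd d (fun i => residue R (a i)) (fun i => residue R (b i)) (red P) m).trace
      / C - ((d ^ m : ℕ) : ResidueField R)) :
    HasMultiplier (fun j => affineCoord P W (φ^[m * j] P)) lam := by
  intro i j
  obtain ⟨α, hα, hαv⟩ := exists_residue_iterate_mul_eq_smul d a b hC hmper i
  obtain ⟨β, hβ, hβv⟩ := exists_residue_iterate_mul_eq_smul d a b hC hmper j
  have hW' : det2 (red P) (red W) ≠ 0 := by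
    rw [← map_det2]
    exact (residue_ne_zero_iff_isUnit _).2 hW
  simp only [Nat.mul_succ, add_comm _ m, Function.iterate_add_apply]
  exact exists_affineCoord_iterate_sub_eq_mul d a b hd hW' hα hβ hαv hβv
    (fun k _ => reduced_iterate_ne_zero d a b hd hgood hP k) hC hmper hlam

lemma isFirstReturn_affineCoord_iterate {P W : R × R} (hW : IsUnit (det2 P W)) {m κ : ℕ}
    (hm : 0 < m) (hκ : 0 < κ) {C : ResidueField R} (hC : C ≠ 0)
    (hmper : φ̄^[m] (red P) = C • red P) (hret : det2 P (φ^[m * κ] P) = 0)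
    (hfirst : ∀ j, 0 < j → det2 P (φ^[j] P) = 0 → m * κ ≤ j) :
    IsFirstReturn (fun j => affineCoord P W (φ^[m * j] P)) κ := by
  have hz : ∀ j, affineCoord P W (φ^[m * j] P) = 0 ↔ det2 P (φ^[m * j] P) = 0 := fun j =>
    affineCoord_eq_zero_iff P W (isUnit_det2_iterate_mul d a b hW hC hmper j)
  have hz0 : affineCoord P W (φ^[m * 0] P) = 0 := affineCoord_self P W
  refine ⟨hκ, by simp only [hz0, hz, hret], fun j hj hjκ h => ?_⟩
  dsimp only at h
  rw [hz0, hz] at h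
  exact absurd (hfirst _ (Nat.mul_pos hm hj) h) (not_le.2 (Nat.mul_lt_mul_of_pos_left hjκ hm))

end Reduction

section FractionRing

variable {R : Type} [CommRing R] [IsDomain R] (d : ℕ) (a b : Fin (d+1) → R)

lemma exists_smul_iterate_iff_det2_eq_zero {P : R × R} (hP : P ≠ 0) {j : ℕ}
    (hj : (evalPair d a b)^[j] P ≠ 0) :
    (∃ c : FractionRing R, c ≠ 0 ∧
      (evalPair d (fun i => algebraMap R (FractionRing R) (a i))
        (fun i => algebraMap R (FractionRing R) (b i)))^[j]
          (algebraMap R (FractionRing R) P.1, algebraMap R (FractionRing R) P.2) =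
        c • (algebraMap R (FractionRing R) P.1, algebraMap R (FractionRing R) P.2))
      ↔ det2 P ((evalPair d a b)^[j] P) = 0 := by
  have hinj := IsFractionRing.injective R (FractionRing R)
  have hmap : ∀ {X : R × R}, X ≠ 0 → Prod.map (algebraMap R (FractionRing R))
      (algebraMap R (FractionRing R)) X ≠ 0 := fun hX h0 =>
    hX (Prod.ext (hinj (by simpa using congrArg Prod.fst h0))
      (hinj (by simpa using congrArg Prod.snd h0)))
  rw [← (injective_iff_map_eq_zero' _).1 hinj, map_det2,
    det2_eq_zero_iff (hmap hP) (hmap hj), map_evalPair_iterate]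
  rfl

end FractionRing

end MortonSilvermanZieve

open MortonSilvermanZieve

/-- `lam` is `(φ_v^m)'(P mod v)`: the Jacobian of the homogeneous lift of `φ_v^m` at a lift of
the fixed point has eigenvalues `d^m C` (on the point itself, by Euler) and `C · lam`. -/
theorem morton_silverman_zieve_general
    (R : Type) [CommRing R] [IsDomain R] [IsDiscreteValuationRing R]
    (d : ℕ) (hd : 2 ≤ d) (a b : Fin (d+1) → R)
    (hgood : IsUnit (resultant d a b))
    (P : R × R) (hP : IsUnit P.1 ∨ IsUnit P.2)
    (n : ℕ) (hn : 0 < n)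
    (hper : ∃ c : FractionRing R, c ≠ 0 ∧
      (evalPair d (fun i => algebraMap R (FractionRing R) (a i))
        (fun i => algebraMap R (FractionRing R) (b i)))^[n]
          (algebraMap R (FractionRing R) P.1, algebraMap R (FractionRing R) P.2) =
        c • (algebraMap R (FractionRing R) P.1, algebraMap R (FractionRing R) P.2))
    (hmin : ∀ m' : ℕ, 0 < m' →
      (∃ c : FractionRing R, c ≠ 0 ∧
        (evalPair d (fun i => algebraMap R (FractionRing R) (a i))
          (fun i => algebraMap R (FractionRing R) (b i)))^[m']
            (algebraMap R (FractionRing R) P.1, algebraMap R (FractionRing R) P.2) =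
          c • (algebraMap R (FractionRing R) P.1, algebraMap R (FractionRing R) P.2)) →
      n ≤ m')
    (m : ℕ) (hm : 0 < m)
    (C : IsLocalRing.ResidueField R) (hC : C ≠ 0)
    (hmper : (evalPair d (fun i => IsLocalRing.residue R (a i))
        (fun i => IsLocalRing.residue R (b i)))^[m]
          (IsLocalRing.residue R P.1, IsLocalRing.residue R P.2) =
        C • (IsLocalRing.residue R P.1, IsLocalRing.residue R P.2))
    (hmmin : ∀ m' : ℕ, 0 < m' →
      (∃ C' : IsLocalRing.ResidueField R, C' ≠ 0 ∧
        (evalPair d (fun i => IsLocalRing.residue R (a i))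
          (fun i => IsLocalRing.residue R (b i)))^[m']
            (IsLocalRing.residue R P.1, IsLocalRing.residue R P.2) =
          C' • (IsLocalRing.residue R P.1, IsLocalRing.residue R P.2)) →
      m ≤ m')
    (lam : IsLocalRing.ResidueField R)
    (hlam : lam = Matrix.trace
        (jacProd d (fun i => IsLocalRing.residue R (a i))
          (fun i => IsLocalRing.residue R (b i))
          (IsLocalRing.residue R P.1, IsLocalRing.residue R P.2) m) / C -
      ((d ^ m : ℕ) : IsLocalRing.ResidueField R)) :
    n = m ∨
      (lam ≠ 0 ∧ ∃ r : ℕ, 0 < r ∧ lam ^ r = 1 ∧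
        (∀ s : ℕ, 0 < s → lam ^ s = 1 → r ≤ s) ∧
        (n = m * r ∨ ∃ e : ℕ, 1 ≤ e ∧
          n = (ringChar (IsLocalRing.ResidueField R)) ^ e * (m * r))) := by
  have hd1 : 1 ≤ d := by omega
  have hprim := isUnit_or_isUnit_evalPair_iterate d a b hd1 hgood hP
  have hdet := fun j => exists_smul_iterate_iff_det2_eq_zero d a b
    (ne_zero_of_isUnit_or_isUnit hP) (j := j) (ne_zero_of_isUnit_or_isUnit (hprim j))
  obtain ⟨κ, rfl⟩ := dvd_of_det2_iterate_eq_zero d a b hd1 hgood hP hm hC hmper hmmin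
    ((hdet n).1 hper)
  obtain ⟨W, hW⟩ := exists_isUnit_det2 hP
  have hκ := isFirstReturn_affineCoord_iterate d a b hW hm (Nat.pos_of_mul_pos_left hn) hC hmper
    ((hdet _).1 hper) fun j hj h => hmin j hj ((hdet j).2 h)
  rcases (hasMultiplier_affineCoord_iterate d a b hd1 hgood hP hW hC hmper hlam).eq_one_or hκ
    with hκ1 | ⟨hr, e, hκe⟩
  · exact Or.inl (by rw [hκ1, mul_one])
  refine Or.inr ⟨ne_zero_pow hr.ne' (by rw [pow_orderOf_eq_one]; exact one_ne_zero),
    orderOf lam, hr, pow_orderOf_eq_one lam, fun s hs => orderOf_le_of_pow_eq_one hs, ?_⟩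
  rcases e with _ | e
  · exact Or.inl (by rw [hκe, pow_zero, one_mul])
  · exact Or.inr ⟨e + 1, by omega, by rw [hκe]; ring⟩

/-- **Morton–Silverman, Zieve.**  Let `R` be a discrete valuation ring with fraction
field `K` and residue field `k(v)`, and let `φ = [F:G]` be an endomorphism of `ℙ¹` of
degree `d ≥ 2` defined over `K`, written in `v`-reduced form (coefficients in `R`,
at least one a unit), with good reduction at `v` (`Res(F,G)` is a unit of `R`).
Let `P ∈ ℙ¹(K)`, written in normalized coordinates over `R`, be periodic for `φ` with
minimal period `n`, let `m` be the minimal period of the reduction of `P` modulo `v`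
for the reduced map `φ_v`, and let `lam = (φ_v^m)'(P mod v)` be the multiplier of the
reduced cycle (computed homogeneously: if `M` is the Jacobian of the `m`-th iterate of
the reduction of `(F,G)` at `P mod v` and `φ_v^m(P mod v) = C • (P mod v)`, then
`lam = trace(M)/C − d^m`).  Then `n = m`, or `n = mr`, or `n = p^e·m·r` with `e ≥ 1`,
where `r` is the multiplicative order of `lam` in `k(v)*` (the latter two cases being
possible only when `lam ≠ 0` and the order is finite), and `p` is the characteristic
of the residue field `k(v)`. -/
theorem morton_silverman_zieve
    (R : Type) [CommRing R] [IsDomain R] [IsDiscreteValuationRing R]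
    (d : ℕ) (hd : 2 ≤ d) (a b : Fin (d+1) → R)
    (hred : (∃ i, IsUnit (a i)) ∨ (∃ i, IsUnit (b i)))
    (hgood : IsUnit (resultant d a b))
    (P : R × R) (hP : IsUnit P.1 ∨ IsUnit P.2)
    (n : ℕ) (hn : 0 < n)
    (hper : ∃ c : FractionRing R, c ≠ 0 ∧
      (evalPair d (fun i => algebraMap R (FractionRing R) (a i))
        (fun i => algebraMap R (FractionRing R) (b i)))^[n]
          (algebraMap R (FractionRing R) P.1, algebraMap R (FractionRing R) P.2) =
        c • (algebraMap R (FractionRing R) P.1, algebraMap R (FractionRing R) P.2))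
    (hmin : ∀ m' : ℕ, 0 < m' →
      (∃ c : FractionRing R, c ≠ 0 ∧
        (evalPair d (fun i => algebraMap R (FractionRing R) (a i))
          (fun i => algebraMap R (FractionRing R) (b i)))^[m']
            (algebraMap R (FractionRing R) P.1, algebraMap R (FractionRing R) P.2) =
          c • (algebraMap R (FractionRing R) P.1, algebraMap R (FractionRing R) P.2)) →
      n ≤ m')
    (m : ℕ) (hm : 0 < m)
    (C : IsLocalRing.ResidueField R) (hC : C ≠ 0)
    (hmper : (evalPair d (fun i => IsLocalRing.residue R (a i))
        (fun i => IsLocalRing.residue R (b i)))^[m]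
          (IsLocalRing.residue R P.1, IsLocalRing.residue R P.2) =
        C • (IsLocalRing.residue R P.1, IsLocalRing.residue R P.2))
    (hmmin : ∀ m' : ℕ, 0 < m' →
      (∃ C' : IsLocalRing.ResidueField R, C' ≠ 0 ∧
        (evalPair d (fun i => IsLocalRing.residue R (a i))
          (fun i => IsLocalRing.residue R (b i)))^[m']
            (IsLocalRing.residue R P.1, IsLocalRing.residue R P.2) =
          C' • (IsLocalRing.residue R P.1, IsLocalRing.residue R P.2)) →
      m ≤ m')
    (lam : IsLocalRing.ResidueField R)
    (hlam : lam = Matrix.trace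
        (jacProd d (fun i => IsLocalRing.residue R (a i))
          (fun i => IsLocalRing.residue R (b i))
          (IsLocalRing.residue R P.1, IsLocalRing.residue R P.2) m) / C -
      ((d ^ m : ℕ) : IsLocalRing.ResidueField R)) :
    n = m ∨
      (lam ≠ 0 ∧ ∃ r : ℕ, 0 < r ∧ lam ^ r = 1 ∧
        (∀ s : ℕ, 0 < s → lam ^ s = 1 → r ≤ s) ∧
        (n = m * r ∨ ∃ e : ℕ, 1 ≤ e ∧
          n = (ringChar (IsLocalRing.ResidueField R)) ^ e * (m * r))) :=
  morton_silverman_zieve_general R d hd a b hgood P hP n hn hper hmin m hm C hC hmper hmmin lam hlam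
end
end
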